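/- arXiv:2102.07979 — 4 statements merged into one kernel-verified Lean document; each statement's English description precedes it below -/
import Mathlib

section
/- Suppose η(t,y) is smooth with invertible Jacobian, ∂_t η = v, a = [∂η]^{-1}, and the matrix-valued function F(t,y) satisfies the evolution equation ∂_t F_{ij} = F_{kj} a^{mk} ∂_m v_i (for all i,j). Then for every l,i,j, ∂_t (F_{ij} a^{li}) = 0. Consequently, if η(0,y) = y and F(0) = F⁰, then F_{kj}(t,y) = F⁰_{lj}(y) ∂_l η_k(t,y), i.e., each column of F is the directional derivative of the flow map along the corresponding column of F⁰: F_j = (F⁰_j·∂)η. -/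
noncomputable section

/-- The spatial Jacobian matrix of a time-dependent map `η(t,y)`:
its `(i, l)` entry at `p = (t, y)` is `∂_l η_i (t, y)`. -/
def sjac (η : ℝ × (Fin 3 → ℝ) → (Fin 3 → ℝ)) (p : ℝ × (Fin 3 → ℝ)) :
    Matrix (Fin 3) (Fin 3) ℝ :=
  Matrix.of fun i l => fderiv ℝ η p ((0 : ℝ), Pi.single l 1) i

namespace DefTensorAux

open ContinuousLinearMap

/-- Smoothness of the entries of the spatial Jacobian. -/
theorem smooth_ent (η : ℝ × (Fin 3 → ℝ) → (Fin 3 → ℝ)) (hη : ContDiff ℝ (⊤ : ℕ∞) η)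
    (i l : Fin 3) : ContDiff ℝ (⊤ : ℕ∞) (fun p => sjac η p i l) := by
  have h1 : ContDiff ℝ (⊤ : ℕ∞) (fderiv ℝ η) := hη.fderiv_right (by simp)
  exact contDiff_pi.mp (h1.clm_apply contDiff_const) i

/-- Smoothness of the entries of the inverse of the spatial Jacobian. -/
theorem smooth_inv_ent (η : ℝ × (Fin 3 → ℝ) → (Fin 3 → ℝ)) (hη : ContDiff ℝ (⊤ : ℕ∞) η)
    (hinv : ∀ p, IsUnit (sjac η p).det) (l i : Fin 3) :
    ContDiff ℝ (⊤ : ℕ∞) (fun p => (sjac η p)⁻¹ l i) := by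
  have hdet : ContDiff ℝ (⊤ : ℕ∞) (fun p => (sjac η p).det) := by
    simp only [Matrix.det_fin_three]
    have h := smooth_ent η hη
    exact ((((((((h _ _).mul (h _ _)).mul (h _ _)).sub (((h _ _).mul (h _ _)).mul (h _ _))).sub
      (((h _ _).mul (h _ _)).mul (h _ _))).add (((h _ _).mul (h _ _)).mul (h _ _))).add
      (((h _ _).mul (h _ _)).mul (h _ _))).sub (((h _ _).mul (h _ _)).mul (h _ _)))
  have hdet0 : ∀ p, (sjac η p).det ≠ 0 := fun p => (hinv p).ne_zero
  have hadj : ContDiff ℝ (⊤ : ℕ∞) (fun p => (sjac η p).adjugate l i) := by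
    have h := smooth_ent η hη
    simp only [Matrix.adjugate_fin_three]
    fin_cases l <;> fin_cases i <;> simp [Matrix.cons_val_zero, Matrix.cons_val_one] <;>
      first
        | exact ((h _ _).mul (h _ _)).sub ((h _ _).mul (h _ _))
        | exact (((h _ _).mul (h _ _)).neg).add ((h _ _).mul (h _ _))
  have : (fun p => (sjac η p)⁻¹ l i) =
      fun p => ((sjac η p).det)⁻¹ * (sjac η p).adjugate l i := by
    funext p
    rw [Matrix.inv_def, Matrix.smul_apply, Ring.inverse_eq_inv', smul_eq_mul]
  rw [this]
  exact (hdet.inv hdet0).mul hadj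

/-- Clairaut / symmetry of second derivatives, in the form we need. -/
theorem swap_deriv (η : ℝ × (Fin 3 → ℝ) → (Fin 3 → ℝ)) (hη : ContDiff ℝ (⊤ : ℕ∞) η)
    (p u w : ℝ × (Fin 3 → ℝ)) (i : Fin 3) :
    fderiv ℝ (fun q => fderiv ℝ η q u i) p w = fderiv ℝ (fun q => fderiv ℝ η q w i) p u := by
  have h1 : ContDiff ℝ (⊤ : ℕ∞) (fderiv ℝ η) := hη.fderiv_right (by simp)
  have hd : DifferentiableAt ℝ (fderiv ℝ η) p := h1.differentiable (by simp) p
  have key : ∀ u' : ℝ × (Fin 3 → ℝ), fderiv ℝ (fun q => fderiv ℝ η q u' i) p =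
      ((proj i : (Fin 3 → ℝ) →L[ℝ] ℝ).comp
        (ContinuousLinearMap.apply ℝ (Fin 3 → ℝ) u')).comp (fderiv ℝ (fderiv ℝ η) p) := by
    intro u'
    exact (((proj i : (Fin 3 → ℝ) →L[ℝ] ℝ).comp
        (ContinuousLinearMap.apply ℝ (Fin 3 → ℝ) u')).hasFDerivAt.comp p hd.hasFDerivAt).fderiv
  have hsymm : fderiv ℝ (fderiv ℝ η) p w u = fderiv ℝ (fderiv ℝ η) p u w := by
    have h2 : (2 : WithTop ℕ∞) ≤ ((⊤ : ℕ∞) : WithTop ℕ∞) := by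
      rw [show ((2:WithTop ℕ∞)) = ((2 : ℕ∞) : WithTop ℕ∞) by norm_cast]
      exact_mod_cast le_top
    exact (hη.contDiffAt.isSymmSndFDerivAt (minSmoothness_of_isRCLikeNormedField.trans_le h2)) w u
  simp only [key, comp_apply, ContinuousLinearMap.apply_apply, proj_apply]
  rw [hsymm]

/-- Derivative of a sum of three products. -/
theorem fderiv_sum3_mul (f g : Fin 3 → (ℝ × (Fin 3 → ℝ)) → ℝ) (p w : ℝ × (Fin 3 → ℝ))
    (hf : ∀ i, DifferentiableAt ℝ (f i) p) (hg : ∀ i, DifferentiableAt ℝ (g i) p) :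
    fderiv ℝ (fun q => ∑ i : Fin 3, f i q * g i q) p w =
      ∑ i : Fin 3, (f i p * fderiv ℝ (g i) p w + g i p * fderiv ℝ (f i) p w) := by
  have h1 : fderiv ℝ (fun q => ∑ i : Fin 3, f i q * g i q) p =
      ∑ i : Fin 3, fderiv ℝ (fun q => f i q * g i q) p :=
    fderiv_fun_sum (fun i _ => (hf i).mul (hg i))
  rw [h1]
  rw [ContinuousLinearMap.sum_apply]
  refine Finset.sum_congr rfl fun i _ => ?_
  rw [fderiv_fun_mul (hf i) (hg i)]
  simp [smul_eq_mul]

end DefTensorAux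

open DefTensorAux in
/-- If `η` is a smooth flow with invertible Jacobian, `η(0,y) = y`, `v = ∂_t η`,
`a = [∂η]⁻¹`, and `F` solves the Lagrangian deformation-tensor equation
`∂_t F_{ij} = F_{kj} a^{mk} ∂_m v_i`, then `∂_t (F_{ij} a^{li}) = 0` (summing over `i`), and
consequently `F_{kj}(t,y) = F⁰_{lj}(y) ∂_l η_k(t,y)`, i.e. `F_j = (F⁰_j · ∂) η`. -/
theorem deformation_tensor_is_directional_derivative_of_flow
    (η : ℝ × (Fin 3 → ℝ) → (Fin 3 → ℝ)) (hη : ContDiff ℝ (⊤ : ℕ∞) η)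
    (hinv : ∀ p, IsUnit (sjac η p).det)
    (hη0 : ∀ y, η (0, y) = y)
    (F : ℝ × (Fin 3 → ℝ) → (Fin 3 → Fin 3 → ℝ)) (hF : ContDiff ℝ (⊤ : ℕ∞) F)
    (hFeq : ∀ p (i j : Fin 3),
      fderiv ℝ (fun q => F q i j) p ((1 : ℝ), 0) =
        ∑ k : Fin 3, ∑ m : Fin 3, F p k j * (sjac η p)⁻¹ m k *
          fderiv ℝ (fun q => fderiv ℝ η q ((1 : ℝ), 0) i) p ((0 : ℝ), Pi.single m 1)) :
    (∀ p (l j : Fin 3),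
        fderiv ℝ (fun q => ∑ i : Fin 3, F q i j * (sjac η q)⁻¹ l i) p ((1 : ℝ), 0) = 0) ∧
      ∀ (t : ℝ) (y : Fin 3 → ℝ) (k j : Fin 3),
        F (t, y) k j =
          ∑ l : Fin 3, F (0, y) l j * fderiv ℝ η (t, y) ((0 : ℝ), Pi.single l 1) k := by
  have hdF : ∀ (p : ℝ × (Fin 3 → ℝ)) (i j : Fin 3), DifferentiableAt ℝ (fun q => F q i j) p :=
    fun p i j =>
      (contDiff_pi.mp (contDiff_pi.mp hF i) j).differentiable (by simp) p
  have hdB : ∀ (p : ℝ × (Fin 3 → ℝ)) (l i : Fin 3),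
      DifferentiableAt ℝ (fun q => (sjac η q)⁻¹ l i) p :=
    fun p l i => (smooth_inv_ent η hη hinv l i).differentiable (by simp) p
  have hdA : ∀ (p : ℝ × (Fin 3 → ℝ)) (i k : Fin 3),
      DifferentiableAt ℝ (fun q => sjac η q i k) p :=
    fun p i k => (smooth_ent η hη i k).differentiable (by simp) p
  have hA'V : ∀ (p : ℝ × (Fin 3 → ℝ)) (i k : Fin 3),
      fderiv ℝ (fun q => sjac η q i k) p ((1:ℝ), 0) =
        fderiv ℝ (fun q => fderiv ℝ η q ((1:ℝ), 0) i) p ((0:ℝ), Pi.single k 1) := by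
    intro p i k
    have h : (fun q => sjac η q i k) = fun q => fderiv ℝ η q ((0:ℝ), Pi.single k 1) i := rfl
    rw [h]
    exact swap_deriv η hη p _ _ i
  have hBA : ∀ (p : ℝ × (Fin 3 → ℝ)) (m k : Fin 3),
      ∑ i : Fin 3, (sjac η p)⁻¹ m i * sjac η p i k = if m = k then 1 else 0 := by
    intro p m k
    have h2 : ((sjac η p)⁻¹ * sjac η p) m k = (1 : Matrix (Fin 3) (Fin 3) ℝ) m k := by
      rw [Matrix.nonsing_inv_mul _ (hinv p)]
    rw [Matrix.mul_apply] at h2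
    rw [h2, Matrix.one_apply]
  have hAB : ∀ (p : ℝ × (Fin 3 → ℝ)) (k i : Fin 3),
      ∑ l : Fin 3, sjac η p k l * (sjac η p)⁻¹ l i = if k = i then 1 else 0 := by
    intro p k i
    have h2 : ((sjac η p) * (sjac η p)⁻¹) k i = (1 : Matrix (Fin 3) (Fin 3) ℝ) k i := by
      rw [Matrix.mul_nonsing_inv _ (hinv p)]
    rw [Matrix.mul_apply] at h2
    rw [h2, Matrix.one_apply]
  have stepb : ∀ (p : ℝ × (Fin 3 → ℝ)) (m k : Fin 3),
      ∑ i : Fin 3, ((sjac η p)⁻¹ m i * fderiv ℝ (fun q => sjac η q i k) p ((1:ℝ),0)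
        + sjac η p i k * fderiv ℝ (fun q => (sjac η q)⁻¹ m i) p ((1:ℝ),0)) = 0 := by
    intro p m k
    have hconst : (fun q => ∑ i : Fin 3, (sjac η q)⁻¹ m i * sjac η q i k)
        = fun _ => if m = k then (1:ℝ) else 0 := funext fun q => hBA q m k
    have h0 : fderiv ℝ (fun q => ∑ i : Fin 3, (sjac η q)⁻¹ m i * sjac η q i k) p ((1:ℝ),0)
        = 0 := by
      rw [hconst]
      simp
    have hsum := fderiv_sum3_mul (fun i q => (sjac η q)⁻¹ m i) (fun i q => sjac η q i k) p
      ((1:ℝ),0) (fun i => hdB p m i) (fun i => hdA p i k)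
    exact (hsum.symm.trans h0)
  -- step c : formula for the time derivative of the inverse Jacobian entries
  have stepc : ∀ (p : ℝ × (Fin 3 → ℝ)) (l r : Fin 3),
      fderiv ℝ (fun q => (sjac η q)⁻¹ l r) p ((1:ℝ),0)
        = -∑ i : Fin 3, ∑ k : Fin 3, (sjac η p)⁻¹ l i *
            fderiv ℝ (fun q => fderiv ℝ η q ((1:ℝ),0) i) p ((0:ℝ), Pi.single k 1) *
            (sjac η p)⁻¹ k r := by
    intro p l r
    have sb : ∀ k : Fin 3,
        ∑ i : Fin 3, ((sjac η p)⁻¹ l i *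
            fderiv ℝ (fun q => fderiv ℝ η q ((1:ℝ),0) i) p ((0:ℝ), Pi.single k 1)
          + sjac η p i k * fderiv ℝ (fun q => (sjac η q)⁻¹ l i) p ((1:ℝ),0)) = 0 := by
      intro k
      have h := stepb p l k
      simp only [hA'V p] at h
      exact h
    have sb0 := sb 0; have sb1 := sb 1; have sb2 := sb 2
    simp only [Fin.sum_univ_three] at sb0 sb1 sb2 ⊢
    fin_cases r <;>
      [(have ab0 := hAB p 0 0; have ab1 := hAB p 1 0; have ab2 := hAB p 2 0);
       (have ab0 := hAB p 0 1; have ab1 := hAB p 1 1; have ab2 := hAB p 2 1);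
       (have ab0 := hAB p 0 2; have ab1 := hAB p 1 2; have ab2 := hAB p 2 2)] <;>
    simp [Fin.sum_univ_three] at ab0 ab1 ab2 <;>
    simp only [Fin.reduceFinMk] <;>
    linear_combination (sjac η p)⁻¹ 0 _ * sb0 + (sjac η p)⁻¹ 1 _ * sb1 +
      (sjac η p)⁻¹ 2 _ * sb2
      - fderiv ℝ (fun q => (sjac η q)⁻¹ l 0) p ((1:ℝ),0) * ab0
      - fderiv ℝ (fun q => (sjac η q)⁻¹ l 1) p ((1:ℝ),0) * ab1
      - fderiv ℝ (fun q => (sjac η q)⁻¹ l 2) p ((1:ℝ),0) * ab2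
  -- Part 1
  have part1 : ∀ p (l j : Fin 3),
      fderiv ℝ (fun q => ∑ i : Fin 3, F q i j * (sjac η q)⁻¹ l i) p ((1 : ℝ), 0) = 0 := by
    intro p l j
    have expand := fderiv_sum3_mul (fun i q => F q i j) (fun i q => (sjac η q)⁻¹ l i) p
      ((1:ℝ),0) (fun i => hdF p i j) (fun i => hdB p l i)
    refine expand.trans ?_
    simp only [Fin.sum_univ_three]
    rw [hFeq p 0 j, hFeq p 1 j, hFeq p 2 j, stepc p l 0, stepc p l 1, stepc p l 2]
    simp only [Fin.sum_univ_three]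
    ring
  refine ⟨part1, ?_⟩
  intro t y k j
  -- the Jacobian at time 0 is the identity
  have hsj0 : sjac η (0, y) = 1 := by
    have hincl : HasFDerivAt (fun z : Fin 3 → ℝ => ((0:ℝ), z))
        (((0 : (Fin 3 → ℝ) →L[ℝ] ℝ)).prod (ContinuousLinearMap.id ℝ (Fin 3 → ℝ))) y :=
      (hasFDerivAt_const (0:ℝ) y).prodMk (hasFDerivAt_id y)
    have hηd : HasFDerivAt η (fderiv ℝ η ((0:ℝ), y)) ((0:ℝ), y) :=
      ((hη.differentiable (by simp)) _).hasFDerivAt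
    have hcomp : HasFDerivAt (fun z : Fin 3 → ℝ => η ((0:ℝ), z))
        ((fderiv ℝ η ((0:ℝ), y)).comp
          (((0 : (Fin 3 → ℝ) →L[ℝ] ℝ)).prod (ContinuousLinearMap.id ℝ (Fin 3 → ℝ)))) y :=
      hηd.comp y hincl
    have hid : (fun z : Fin 3 → ℝ => η ((0:ℝ), z)) = id := funext fun z => hη0 z
    rw [hid] at hcomp
    have huniq := hcomp.unique (hasFDerivAt_id y)
    ext i l
    have happ := congrArg (fun (L : (Fin 3 → ℝ) →L[ℝ] (Fin 3 → ℝ)) => L (Pi.single l 1)) huniq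
    simp only [ContinuousLinearMap.comp_apply, ContinuousLinearMap.prod_apply,
      ContinuousLinearMap.zero_apply, ContinuousLinearMap.coe_id', id_eq] at happ
    have : fderiv ℝ η ((0:ℝ), y) ((0:ℝ), Pi.single l 1) = Pi.single l 1 := happ
    show fderiv ℝ η ((0:ℝ), y) ((0:ℝ), Pi.single l 1) i = (1 : Matrix (Fin 3) (Fin 3) ℝ) i l
    rw [this, Matrix.one_apply, Pi.single_apply]
  -- each combination ∑ᵢ F i j * B l i is constant in time
  have key : ∀ (l : Fin 3),
      ∑ i : Fin 3, F (t, y) i j * (sjac η (t, y))⁻¹ l i = F (0, y) l j := by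
    intro l
    set g : ℝ → ℝ := fun s => ∑ i : Fin 3, F (s, y) i j * (sjac η (s, y))⁻¹ l i with hg
    have hgd : ∀ s : ℝ, HasDerivAt g 0 s := by
      intro s
      have hGd : DifferentiableAt ℝ (fun q => ∑ i : Fin 3, F q i j * (sjac η q)⁻¹ l i)
          (s, y) := by
        apply DifferentiableAt.fun_sum
        intro i _
        exact (hdF (s,y) i j).mul (hdB (s,y) l i)
      have hcurve : HasDerivAt (fun s : ℝ => ((s : ℝ), y)) ((1:ℝ), (0 : Fin 3 → ℝ)) s :=
        (hasDerivAt_id s).prodMk (hasDerivAt_const s y)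
      have hcomp := hGd.hasFDerivAt.comp_hasDerivAt s hcurve
      have := part1 (s, y) l j
      rw [this] at hcomp
      exact hcomp
    have hconst : g t = g 0 :=
      is_const_of_deriv_eq_zero (fun s => (hgd s).differentiableAt)
        (fun s => (hgd s).deriv) t 0
    have hg0 : g 0 = F (0, y) l j := by
      simp only [hg, hsj0, inv_one, Matrix.one_apply]
      simp [Finset.sum_ite_eq]
    exact hconst.trans hg0
  -- assemble
  have ab : ∀ i : Fin 3,
      ∑ l : Fin 3, sjac η (t,y) k l * (sjac η (t,y))⁻¹ l i = if k = i then 1 else 0 :=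
    fun i => hAB (t,y) k i
  have key0 := key 0; have key1 := key 1; have key2 := key 2
  have ab0 := ab 0; have ab1 := ab 1; have ab2 := ab 2
  have hent : ∀ l : Fin 3, fderiv ℝ η (t, y) ((0 : ℝ), Pi.single l 1) k = sjac η (t,y) k l :=
    fun l => rfl
  simp only [hent, Fin.sum_univ_three] at key0 key1 key2 ab0 ab1 ab2 ⊢
  fin_cases k <;> simp [Fin.sum_univ_three] at ab0 ab1 ab2 <;> simp only [Fin.reduceFinMk] <;>
    linear_combination sjac η (t,y) _ 0 * key0 + sjac η (t,y) _ 1 * key1 +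
      sjac η (t,y) _ 2 * key2 - F (t,y) 0 j * ab0 - F (t,y) 1 j * ab1 - F (t,y) 2 j * ab2
end
end

section
/- Let η : Ω → ℝ³ be C² with invertible Jacobian, a = [∂η]^{-1}, and let F⁰ : Ω → ℝ³ be a C¹ vector field. Then for any C² vector field f : Ω → ℝ³, the commutator of the a-divergence with the directional derivative (F⁰·∂) is given by: a^{li} ∂_l ( F⁰_k ∂_k f_i ) − F⁰_k ∂_k ( a^{li} ∂_l f_i ) = ( a^{mi} ∂_m ((F⁰·∂)η_r) ) ( a^{lr} ∂_l f_i ), i.e., [div_a, (F⁰·∂)] f = ∇_a^i((F⁰·∂)η_r) · ∇_a^r f_i. -/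
noncomputable section

/-- The Jacobian matrix of `η` at `x`: its `(i, l)` entry is `∂_l η_i (x)`. -/
def jacobian (η : (Fin 3 → ℝ) → (Fin 3 → ℝ)) (x : Fin 3 → ℝ) : Matrix (Fin 3) (Fin 3) ℝ :=
  Matrix.of fun i l => fderiv ℝ η x (Pi.single l 1) i

-- C¹ of λ y, fderiv g y v for C² g
lemma d1C1 {g : (Fin 3 → ℝ) → ℝ} (hg : ContDiff ℝ 2 g) (v : Fin 3 → ℝ) :
    ContDiff ℝ 1 (fun y => fderiv ℝ g y v) :=
  (hg.fderiv_right (le_refl 2)).clm_apply contDiff_const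

lemma entryC1 {η : (Fin 3 → ℝ) → (Fin 3 → ℝ)} (hη : ContDiff ℝ 2 η) (i l : Fin 3) :
    ContDiff ℝ 1 (fun y => jacobian η y i l) := by
  have h : ContDiff ℝ 1 (fun y => fderiv ℝ η y (Pi.single l 1)) :=
    (hη.fderiv_right (le_refl 2)).clm_apply contDiff_const
  exact (contDiff_pi.mp h i)

-- coordinate form of jacobian entries, as functions
lemma jac_coord {η : (Fin 3 → ℝ) → (Fin 3 → ℝ)} (hη : ContDiff ℝ 2 η) (r m : Fin 3) :
    (fun y => jacobian η y r m) = fun y => fderiv ℝ (fun z => η z r) y (Pi.single m 1) := by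
  funext y
  show fderiv ℝ η y (Pi.single m 1) r = _
  rw [fderiv_pi (fun i => ((contDiff_pi.mp hη i).differentiable two_ne_zero).differentiableAt)]
  rfl

lemma symm2 {g : (Fin 3 → ℝ) → ℝ} (hg : ContDiff ℝ 2 g) (x v w : Fin 3 → ℝ) :
    fderiv ℝ (fun y => fderiv ℝ g y v) x w = fderiv ℝ (fun y => fderiv ℝ g y w) x v := by
  have key : ∀ v w : Fin 3 → ℝ, fderiv ℝ (fun y => fderiv ℝ g y v) x w
      = fderiv ℝ (fderiv ℝ g) x w v := by
    intro v w
    rw [fderiv_clm_apply ((hg.fderiv_right (m := 1) (le_refl 2)).differentiable one_ne_zero x)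
      (differentiableAt_const v)]
    simp
  rw [key v w, key w v]
  exact (hg.contDiffAt.isSymmSndFDerivAt (by simp [minSmoothness_of_isRCLikeNormedField])).eq w v

lemma fderiv_dirsum {F0 : (Fin 3 → ℝ) → (Fin 3 → ℝ)} (hF0 : ContDiff ℝ 1 F0)
    {g : (Fin 3 → ℝ) → ℝ} (hg : ContDiff ℝ 2 g) (x v : Fin 3 → ℝ) :
    fderiv ℝ (fun y => ∑ k : Fin 3, F0 y k * fderiv ℝ g y (Pi.single k 1)) x v
      = ∑ k : Fin 3, (fderiv ℝ (fun y => F0 y k) x v * fderiv ℝ g x (Pi.single k 1)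
          + F0 x k * fderiv ℝ (fun y => fderiv ℝ g y (Pi.single k 1)) x v) := by
  have hFk : ∀ k : Fin 3, DifferentiableAt ℝ (fun y => F0 y k) x := fun k =>
    ((contDiff_pi.mp hF0 k).differentiable one_ne_zero).differentiableAt
  have hgk : ∀ k : Fin 3, DifferentiableAt ℝ (fun y => fderiv ℝ g y (Pi.single k 1)) x :=
    fun k => ((d1C1 hg _).differentiable one_ne_zero).differentiableAt
  rw [fderiv_fun_sum (fun k _ => (hFk k).fun_mul (hgk k))]
  rw [ContinuousLinearMap.sum_apply]
  refine Finset.sum_congr rfl fun k _ => ?_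
  rw [fderiv_fun_mul (hFk k) (hgk k)]
  simp only [ContinuousLinearMap.add_apply, ContinuousLinearMap.smul_apply, smul_eq_mul]
  ring

lemma detC1 {η : (Fin 3 → ℝ) → (Fin 3 → ℝ)} (hη : ContDiff ℝ 2 η) :
    ContDiff ℝ 1 (fun y => (jacobian η y).det) := by
  have h : ∀ i l : Fin 3, ContDiff ℝ 1 (fun y => jacobian η y i l) := entryC1 hη
  have h00 := h 0 0; have h01 := h 0 1; have h02 := h 0 2
  have h10 := h 1 0; have h11 := h 1 1; have h12 := h 1 2
  have h20 := h 2 0; have h21 := h 2 1; have h22 := h 2 2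
  simp only [Matrix.det_fin_three]
  fun_prop

lemma adjC1 {η : (Fin 3 → ℝ) → (Fin 3 → ℝ)} (hη : ContDiff ℝ 2 η) (l i : Fin 3) :
    ContDiff ℝ 1 (fun y => (jacobian η y).adjugate l i) := by
  have h : ∀ i l : Fin 3, ContDiff ℝ 1 (fun y => jacobian η y i l) := entryC1 hη
  have h00 := h 0 0; have h01 := h 0 1; have h02 := h 0 2
  have h10 := h 1 0; have h11 := h 1 1; have h12 := h 1 2
  have h20 := h 2 0; have h21 := h 2 1; have h22 := h 2 2
  fin_cases l <;> fin_cases i <;>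
    simp [Matrix.adjugate_fin_three, Matrix.vecHead, Matrix.vecTail, Function.comp] <;>
    fun_prop

lemma invC1 {η : (Fin 3 → ℝ) → (Fin 3 → ℝ)} (hη : ContDiff ℝ 2 η)
    (hinv : ∀ x, IsUnit (jacobian η x).det) (l i : Fin 3) :
    ContDiff ℝ 1 (fun y => (jacobian η y)⁻¹ l i) := by
  have : (fun y => (jacobian η y)⁻¹ l i)
      = fun y => ((jacobian η y).det)⁻¹ * (jacobian η y).adjugate l i := by
    funext y
    rw [Matrix.inv_def]
    simp [Ring.inverse_eq_inv, Matrix.smul_apply, smul_eq_mul]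
  rw [this]
  exact ((detC1 hη).inv fun y => (hinv y).ne_zero).mul (adjC1 hη l i)

-- algebraic solver for the inverse derivative
lemma inv_solve (da c : Fin 3 → ℝ) (N a : Fin 3 → Fin 3 → ℝ)
    (h1 : ∀ m, (∑ j : Fin 3, da j * N j m) + c m = 0)
    (hAa : ∀ j i, ∑ m : Fin 3, N j m * a m i = if j = i then 1 else 0) (i : Fin 3) :
    da i = -∑ m : Fin 3, c m * a m i := by
  have e0 := h1 0; have e1 := h1 1; have e2 := h1 2
  have g0 := hAa 0 i; have g1 := hAa 1 i; have g2 := hAa 2 i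
  fin_cases i <;>
  · simp only [Fin.zero_eta, Fin.mk_one, show (⟨2, by omega⟩ : Fin 3) = (2 : Fin 3) from rfl,
      Fin.sum_univ_three,
      show ((0:Fin 3) = 0) = True from by decide, show ((1:Fin 3) = 1) = True from by decide,
      show ((2:Fin 3) = 2) = True from by decide, show ((0:Fin 3) = 1) = False from by decide,
      show ((0:Fin 3) = 2) = False from by decide, show ((1:Fin 3) = 0) = False from by decide,
      show ((1:Fin 3) = 2) = False from by decide, show ((2:Fin 3) = 0) = False from by decide,
      show ((2:Fin 3) = 1) = False from by decide, if_true, if_false] at e0 e1 e2 g0 g1 g2 ⊢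
    linear_combination a 0 _ * e0 + a 1 _ * e1 + a 2 _ * e2 - da 0 * g0 - da 1 * g1 - da 2 * g2

lemma inv_fderiv {η : (Fin 3 → ℝ) → (Fin 3 → ℝ)} (hη : ContDiff ℝ 2 η)
    (hinv : ∀ x, IsUnit (jacobian η x).det) (x : Fin 3 → ℝ) (k l i : Fin 3) :
    fderiv ℝ (fun y => (jacobian η y)⁻¹ l i) x (Pi.single k 1)
      = -∑ m : Fin 3, (∑ j : Fin 3, (jacobian η x)⁻¹ l j *
            fderiv ℝ (fun y => jacobian η y j m) x (Pi.single k 1)) * (jacobian η x)⁻¹ m i := by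
  have hdif : ∀ j : Fin 3, DifferentiableAt ℝ (fun y => (jacobian η y)⁻¹ l j) x := fun j =>
    ((invC1 hη hinv l j).differentiable one_ne_zero).differentiableAt
  have hdifN : ∀ j m : Fin 3, DifferentiableAt ℝ (fun y => jacobian η y j m) x := fun j m =>
    ((entryC1 hη j m).differentiable one_ne_zero).differentiableAt
  have hAa : ∀ j i : Fin 3, ∑ m : Fin 3, jacobian η x j m * (jacobian η x)⁻¹ m i
      = if j = i then 1 else 0 := by
    intro j i
    rw [← Matrix.mul_apply, Matrix.mul_nonsing_inv _ (hinv x), Matrix.one_apply]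
  have h1 : ∀ m : Fin 3,
      (∑ j : Fin 3, fderiv ℝ (fun y => (jacobian η y)⁻¹ l j) x (Pi.single k 1)
          * jacobian η x j m)
        + (∑ j : Fin 3, (jacobian η x)⁻¹ l j *
            fderiv ℝ (fun y => jacobian η y j m) x (Pi.single k 1)) = 0 := by
    intro m
    have hid : (fun y => ∑ j : Fin 3, (jacobian η y)⁻¹ l j * jacobian η y j m)
        = (fun _ : Fin 3 → ℝ => if l = m then (1:ℝ) else 0) := by
      funext y
      rw [← Matrix.mul_apply, Matrix.nonsing_inv_mul _ (hinv y), Matrix.one_apply]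
    have h0 : fderiv ℝ (fun y => ∑ j : Fin 3, (jacobian η y)⁻¹ l j * jacobian η y j m) x
        (Pi.single k 1) = 0 := by rw [hid]; simp
    rw [fderiv_fun_sum (fun j _ => (hdif j).fun_mul (hdifN j m))] at h0
    simp only [ContinuousLinearMap.sum_apply] at h0
    have expand : ∀ j : Fin 3,
        (fderiv ℝ (fun y => (jacobian η y)⁻¹ l j * jacobian η y j m) x) (Pi.single k 1)
          = fderiv ℝ (fun y => (jacobian η y)⁻¹ l j) x (Pi.single k 1) * jacobian η x j m
            + (jacobian η x)⁻¹ l j * fderiv ℝ (fun y => jacobian η y j m) x (Pi.single k 1) := by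
      intro j
      rw [fderiv_fun_mul (hdif j) (hdifN j m)]
      simp only [ContinuousLinearMap.add_apply, ContinuousLinearMap.smul_apply, smul_eq_mul]
      ring
    simp only [expand] at h0
    rw [Finset.sum_add_distrib] at h0
    exact h0
  exact inv_solve _ _ (fun j m => jacobian η x j m) (fun m i => (jacobian η x)⁻¹ m i) h1 hAa i

lemma algebra_main (a N dF df : Fin 3 → Fin 3 → ℝ) (F : Fin 3 → ℝ)
    (d2f d2η : Fin 3 → Fin 3 → Fin 3 → ℝ)
    (haN : ∀ l k, ∑ r : Fin 3, a l r * N r k = if l = k then 1 else 0)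
    (hsf : ∀ k l i, d2f k l i = d2f l k i)
    (hsη : ∀ k m r, d2η k m r = d2η m k r) :
    (∑ l : Fin 3, ∑ i : Fin 3, a l i * (∑ k : Fin 3, (dF l k * df k i + F k * d2f l k i)))
      - (∑ k : Fin 3, F k * (∑ l : Fin 3, ∑ i : Fin 3,
          ((-∑ m : Fin 3, (∑ r : Fin 3, a l r * d2η k m r) * a m i) * df l i
            + a l i * d2f k l i)))
    = ∑ i : Fin 3, ∑ r : Fin 3,
        (∑ m : Fin 3, a m i * (∑ k : Fin 3, (dF m k * N r k + F k * d2η m k r)))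
          * (∑ l : Fin 3, a l r * df l i) := by
  have h00 := haN 0 0; have h01 := haN 0 1; have h02 := haN 0 2
  have h10 := haN 1 0; have h11 := haN 1 1; have h12 := haN 1 2
  have h20 := haN 2 0; have h21 := haN 2 1; have h22 := haN 2 2
  simp only [Fin.sum_univ_three] at *
  simp only [show ((0:Fin 3) = 0) = True from by decide, show ((1:Fin 3) = 1) = True from by decide,
    show ((2:Fin 3) = 2) = True from by decide, show ((0:Fin 3) = 1) = False from by decide,
    show ((0:Fin 3) = 2) = False from by decide, show ((1:Fin 3) = 0) = False from by decide,
    show ((1:Fin 3) = 2) = False from by decide, show ((2:Fin 3) = 0) = False from by decide,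
    show ((2:Fin 3) = 1) = False from by decide, if_true, if_false]
    at h00 h01 h02 h10 h11 h12 h20 h21 h22
  linear_combination
      (-(a 0 0 * dF 0 0 * df 0 0 + a 1 0 * dF 1 0 * df 0 0 + a 2 0 * dF 2 0 * df 0 0 + a 0 1 * dF 0 0 * df 0 1 + a 1 1 * dF 1 0 * df 0 1 + a 2 1 * dF 2 0 * df 0 1 + a 0 2 * dF 0 0 * df 0 2 + a 1 2 * dF 1 0 * df 0 2 + a 2 2 * dF 2 0 * df 0 2)) * h00 +
      (-(a 0 0 * dF 0 1 * df 0 0 + a 1 0 * dF 1 1 * df 0 0 + a 2 0 * dF 2 1 * df 0 0 + a 0 1 * dF 0 1 * df 0 1 + a 1 1 * dF 1 1 * df 0 1 + a 2 1 * dF 2 1 * df 0 1 + a 0 2 * dF 0 1 * df 0 2 + a 1 2 * dF 1 1 * df 0 2 + a 2 2 * dF 2 1 * df 0 2)) * h01 +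
      (-(a 0 0 * dF 0 2 * df 0 0 + a 1 0 * dF 1 2 * df 0 0 + a 2 0 * dF 2 2 * df 0 0 + a 0 1 * dF 0 2 * df 0 1 + a 1 1 * dF 1 2 * df 0 1 + a 2 1 * dF 2 2 * df 0 1 + a 0 2 * dF 0 2 * df 0 2 + a 1 2 * dF 1 2 * df 0 2 + a 2 2 * dF 2 2 * df 0 2)) * h02 +
      (-(a 0 0 * dF 0 0 * df 1 0 + a 1 0 * dF 1 0 * df 1 0 + a 2 0 * dF 2 0 * df 1 0 + a 0 1 * dF 0 0 * df 1 1 + a 1 1 * dF 1 0 * df 1 1 + a 2 1 * dF 2 0 * df 1 1 + a 0 2 * dF 0 0 * df 1 2 + a 1 2 * dF 1 0 * df 1 2 + a 2 2 * dF 2 0 * df 1 2)) * h10 +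
      (-(a 0 0 * dF 0 1 * df 1 0 + a 1 0 * dF 1 1 * df 1 0 + a 2 0 * dF 2 1 * df 1 0 + a 0 1 * dF 0 1 * df 1 1 + a 1 1 * dF 1 1 * df 1 1 + a 2 1 * dF 2 1 * df 1 1 + a 0 2 * dF 0 1 * df 1 2 + a 1 2 * dF 1 1 * df 1 2 + a 2 2 * dF 2 1 * df 1 2)) * h11 +
      (-(a 0 0 * dF 0 2 * df 1 0 + a 1 0 * dF 1 2 * df 1 0 + a 2 0 * dF 2 2 * df 1 0 + a 0 1 * dF 0 2 * df 1 1 + a 1 1 * dF 1 2 * df 1 1 + a 2 1 * dF 2 2 * df 1 1 + a 0 2 * dF 0 2 * df 1 2 + a 1 2 * dF 1 2 * df 1 2 + a 2 2 * dF 2 2 * df 1 2)) * h12 +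
      (-(a 0 0 * dF 0 0 * df 2 0 + a 1 0 * dF 1 0 * df 2 0 + a 2 0 * dF 2 0 * df 2 0 + a 0 1 * dF 0 0 * df 2 1 + a 1 1 * dF 1 0 * df 2 1 + a 2 1 * dF 2 0 * df 2 1 + a 0 2 * dF 0 0 * df 2 2 + a 1 2 * dF 1 0 * df 2 2 + a 2 2 * dF 2 0 * df 2 2)) * h20 +
      (-(a 0 0 * dF 0 1 * df 2 0 + a 1 0 * dF 1 1 * df 2 0 + a 2 0 * dF 2 1 * df 2 0 + a 0 1 * dF 0 1 * df 2 1 + a 1 1 * dF 1 1 * df 2 1 + a 2 1 * dF 2 1 * df 2 1 + a 0 2 * dF 0 1 * df 2 2 + a 1 2 * dF 1 1 * df 2 2 + a 2 2 * dF 2 1 * df 2 2)) * h21 +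
      (-(a 0 0 * dF 0 2 * df 2 0 + a 1 0 * dF 1 2 * df 2 0 + a 2 0 * dF 2 2 * df 2 0 + a 0 1 * dF 0 2 * df 2 1 + a 1 1 * dF 1 2 * df 2 1 + a 2 1 * dF 2 2 * df 2 1 + a 0 2 * dF 0 2 * df 2 2 + a 1 2 * dF 1 2 * df 2 2 + a 2 2 * dF 2 2 * df 2 2)) * h22 +
      (-(F 0 * a 0 0)) * hsf 0 0 0 +
      (-(F 0 * a 0 1)) * hsf 0 0 1 +
      (-(F 0 * a 0 2)) * hsf 0 0 2 +
      (-(F 0 * a 1 0)) * hsf 0 1 0 +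
      (-(F 0 * a 1 1)) * hsf 0 1 1 +
      (-(F 0 * a 1 2)) * hsf 0 1 2 +
      (-(F 0 * a 2 0)) * hsf 0 2 0 +
      (-(F 0 * a 2 1)) * hsf 0 2 1 +
      (-(F 0 * a 2 2)) * hsf 0 2 2 +
      (-(F 1 * a 0 0)) * hsf 1 0 0 +
      (-(F 1 * a 0 1)) * hsf 1 0 1 +
      (-(F 1 * a 0 2)) * hsf 1 0 2 +
      (-(F 1 * a 1 0)) * hsf 1 1 0 +
      (-(F 1 * a 1 1)) * hsf 1 1 1 +
      (-(F 1 * a 1 2)) * hsf 1 1 2 +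
      (-(F 1 * a 2 0)) * hsf 1 2 0 +
      (-(F 1 * a 2 1)) * hsf 1 2 1 +
      (-(F 1 * a 2 2)) * hsf 1 2 2 +
      (-(F 2 * a 0 0)) * hsf 2 0 0 +
      (-(F 2 * a 0 1)) * hsf 2 0 1 +
      (-(F 2 * a 0 2)) * hsf 2 0 2 +
      (-(F 2 * a 1 0)) * hsf 2 1 0 +
      (-(F 2 * a 1 1)) * hsf 2 1 1 +
      (-(F 2 * a 1 2)) * hsf 2 1 2 +
      (-(F 2 * a 2 0)) * hsf 2 2 0 +
      (-(F 2 * a 2 1)) * hsf 2 2 1 +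
      (-(F 2 * a 2 2)) * hsf 2 2 2 +
      (F 0 * (a 0 0 * a 0 0 * df 0 0 + a 0 0 * a 0 1 * df 0 1 + a 0 0 * a 0 2 * df 0 2 + a 1 0 * a 0 0 * df 1 0 + a 1 0 * a 0 1 * df 1 1 + a 1 0 * a 0 2 * df 1 2 + a 2 0 * a 0 0 * df 2 0 + a 2 0 * a 0 1 * df 2 1 + a 2 0 * a 0 2 * df 2 2)) * hsη 0 0 0 +
      (F 0 * (a 0 1 * a 0 0 * df 0 0 + a 0 1 * a 0 1 * df 0 1 + a 0 1 * a 0 2 * df 0 2 + a 1 1 * a 0 0 * df 1 0 + a 1 1 * a 0 1 * df 1 1 + a 1 1 * a 0 2 * df 1 2 + a 2 1 * a 0 0 * df 2 0 + a 2 1 * a 0 1 * df 2 1 + a 2 1 * a 0 2 * df 2 2)) * hsη 0 0 1 +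
      (F 0 * (a 0 2 * a 0 0 * df 0 0 + a 0 2 * a 0 1 * df 0 1 + a 0 2 * a 0 2 * df 0 2 + a 1 2 * a 0 0 * df 1 0 + a 1 2 * a 0 1 * df 1 1 + a 1 2 * a 0 2 * df 1 2 + a 2 2 * a 0 0 * df 2 0 + a 2 2 * a 0 1 * df 2 1 + a 2 2 * a 0 2 * df 2 2)) * hsη 0 0 2 +
      (F 0 * (a 0 0 * a 1 0 * df 0 0 + a 0 0 * a 1 1 * df 0 1 + a 0 0 * a 1 2 * df 0 2 + a 1 0 * a 1 0 * df 1 0 + a 1 0 * a 1 1 * df 1 1 + a 1 0 * a 1 2 * df 1 2 + a 2 0 * a 1 0 * df 2 0 + a 2 0 * a 1 1 * df 2 1 + a 2 0 * a 1 2 * df 2 2)) * hsη 0 1 0 +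
      (F 0 * (a 0 1 * a 1 0 * df 0 0 + a 0 1 * a 1 1 * df 0 1 + a 0 1 * a 1 2 * df 0 2 + a 1 1 * a 1 0 * df 1 0 + a 1 1 * a 1 1 * df 1 1 + a 1 1 * a 1 2 * df 1 2 + a 2 1 * a 1 0 * df 2 0 + a 2 1 * a 1 1 * df 2 1 + a 2 1 * a 1 2 * df 2 2)) * hsη 0 1 1 +
      (F 0 * (a 0 2 * a 1 0 * df 0 0 + a 0 2 * a 1 1 * df 0 1 + a 0 2 * a 1 2 * df 0 2 + a 1 2 * a 1 0 * df 1 0 + a 1 2 * a 1 1 * df 1 1 + a 1 2 * a 1 2 * df 1 2 + a 2 2 * a 1 0 * df 2 0 + a 2 2 * a 1 1 * df 2 1 + a 2 2 * a 1 2 * df 2 2)) * hsη 0 1 2 +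
      (F 0 * (a 0 0 * a 2 0 * df 0 0 + a 0 0 * a 2 1 * df 0 1 + a 0 0 * a 2 2 * df 0 2 + a 1 0 * a 2 0 * df 1 0 + a 1 0 * a 2 1 * df 1 1 + a 1 0 * a 2 2 * df 1 2 + a 2 0 * a 2 0 * df 2 0 + a 2 0 * a 2 1 * df 2 1 + a 2 0 * a 2 2 * df 2 2)) * hsη 0 2 0 +
      (F 0 * (a 0 1 * a 2 0 * df 0 0 + a 0 1 * a 2 1 * df 0 1 + a 0 1 * a 2 2 * df 0 2 + a 1 1 * a 2 0 * df 1 0 + a 1 1 * a 2 1 * df 1 1 + a 1 1 * a 2 2 * df 1 2 + a 2 1 * a 2 0 * df 2 0 + a 2 1 * a 2 1 * df 2 1 + a 2 1 * a 2 2 * df 2 2)) * hsη 0 2 1 +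
      (F 0 * (a 0 2 * a 2 0 * df 0 0 + a 0 2 * a 2 1 * df 0 1 + a 0 2 * a 2 2 * df 0 2 + a 1 2 * a 2 0 * df 1 0 + a 1 2 * a 2 1 * df 1 1 + a 1 2 * a 2 2 * df 1 2 + a 2 2 * a 2 0 * df 2 0 + a 2 2 * a 2 1 * df 2 1 + a 2 2 * a 2 2 * df 2 2)) * hsη 0 2 2 +
      (F 1 * (a 0 0 * a 0 0 * df 0 0 + a 0 0 * a 0 1 * df 0 1 + a 0 0 * a 0 2 * df 0 2 + a 1 0 * a 0 0 * df 1 0 + a 1 0 * a 0 1 * df 1 1 + a 1 0 * a 0 2 * df 1 2 + a 2 0 * a 0 0 * df 2 0 + a 2 0 * a 0 1 * df 2 1 + a 2 0 * a 0 2 * df 2 2)) * hsη 1 0 0 +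
      (F 1 * (a 0 1 * a 0 0 * df 0 0 + a 0 1 * a 0 1 * df 0 1 + a 0 1 * a 0 2 * df 0 2 + a 1 1 * a 0 0 * df 1 0 + a 1 1 * a 0 1 * df 1 1 + a 1 1 * a 0 2 * df 1 2 + a 2 1 * a 0 0 * df 2 0 + a 2 1 * a 0 1 * df 2 1 + a 2 1 * a 0 2 * df 2 2)) * hsη 1 0 1 +
      (F 1 * (a 0 2 * a 0 0 * df 0 0 + a 0 2 * a 0 1 * df 0 1 + a 0 2 * a 0 2 * df 0 2 + a 1 2 * a 0 0 * df 1 0 + a 1 2 * a 0 1 * df 1 1 + a 1 2 * a 0 2 * df 1 2 + a 2 2 * a 0 0 * df 2 0 + a 2 2 * a 0 1 * df 2 1 + a 2 2 * a 0 2 * df 2 2)) * hsη 1 0 2 +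
      (F 1 * (a 0 0 * a 1 0 * df 0 0 + a 0 0 * a 1 1 * df 0 1 + a 0 0 * a 1 2 * df 0 2 + a 1 0 * a 1 0 * df 1 0 + a 1 0 * a 1 1 * df 1 1 + a 1 0 * a 1 2 * df 1 2 + a 2 0 * a 1 0 * df 2 0 + a 2 0 * a 1 1 * df 2 1 + a 2 0 * a 1 2 * df 2 2)) * hsη 1 1 0 +
      (F 1 * (a 0 1 * a 1 0 * df 0 0 + a 0 1 * a 1 1 * df 0 1 + a 0 1 * a 1 2 * df 0 2 + a 1 1 * a 1 0 * df 1 0 + a 1 1 * a 1 1 * df 1 1 + a 1 1 * a 1 2 * df 1 2 + a 2 1 * a 1 0 * df 2 0 + a 2 1 * a 1 1 * df 2 1 + a 2 1 * a 1 2 * df 2 2)) * hsη 1 1 1 +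
      (F 1 * (a 0 2 * a 1 0 * df 0 0 + a 0 2 * a 1 1 * df 0 1 + a 0 2 * a 1 2 * df 0 2 + a 1 2 * a 1 0 * df 1 0 + a 1 2 * a 1 1 * df 1 1 + a 1 2 * a 1 2 * df 1 2 + a 2 2 * a 1 0 * df 2 0 + a 2 2 * a 1 1 * df 2 1 + a 2 2 * a 1 2 * df 2 2)) * hsη 1 1 2 +
      (F 1 * (a 0 0 * a 2 0 * df 0 0 + a 0 0 * a 2 1 * df 0 1 + a 0 0 * a 2 2 * df 0 2 + a 1 0 * a 2 0 * df 1 0 + a 1 0 * a 2 1 * df 1 1 + a 1 0 * a 2 2 * df 1 2 + a 2 0 * a 2 0 * df 2 0 + a 2 0 * a 2 1 * df 2 1 + a 2 0 * a 2 2 * df 2 2)) * hsη 1 2 0 +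
      (F 1 * (a 0 1 * a 2 0 * df 0 0 + a 0 1 * a 2 1 * df 0 1 + a 0 1 * a 2 2 * df 0 2 + a 1 1 * a 2 0 * df 1 0 + a 1 1 * a 2 1 * df 1 1 + a 1 1 * a 2 2 * df 1 2 + a 2 1 * a 2 0 * df 2 0 + a 2 1 * a 2 1 * df 2 1 + a 2 1 * a 2 2 * df 2 2)) * hsη 1 2 1 +
      (F 1 * (a 0 2 * a 2 0 * df 0 0 + a 0 2 * a 2 1 * df 0 1 + a 0 2 * a 2 2 * df 0 2 + a 1 2 * a 2 0 * df 1 0 + a 1 2 * a 2 1 * df 1 1 + a 1 2 * a 2 2 * df 1 2 + a 2 2 * a 2 0 * df 2 0 + a 2 2 * a 2 1 * df 2 1 + a 2 2 * a 2 2 * df 2 2)) * hsη 1 2 2 +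
      (F 2 * (a 0 0 * a 0 0 * df 0 0 + a 0 0 * a 0 1 * df 0 1 + a 0 0 * a 0 2 * df 0 2 + a 1 0 * a 0 0 * df 1 0 + a 1 0 * a 0 1 * df 1 1 + a 1 0 * a 0 2 * df 1 2 + a 2 0 * a 0 0 * df 2 0 + a 2 0 * a 0 1 * df 2 1 + a 2 0 * a 0 2 * df 2 2)) * hsη 2 0 0 +
      (F 2 * (a 0 1 * a 0 0 * df 0 0 + a 0 1 * a 0 1 * df 0 1 + a 0 1 * a 0 2 * df 0 2 + a 1 1 * a 0 0 * df 1 0 + a 1 1 * a 0 1 * df 1 1 + a 1 1 * a 0 2 * df 1 2 + a 2 1 * a 0 0 * df 2 0 + a 2 1 * a 0 1 * df 2 1 + a 2 1 * a 0 2 * df 2 2)) * hsη 2 0 1 +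
      (F 2 * (a 0 2 * a 0 0 * df 0 0 + a 0 2 * a 0 1 * df 0 1 + a 0 2 * a 0 2 * df 0 2 + a 1 2 * a 0 0 * df 1 0 + a 1 2 * a 0 1 * df 1 1 + a 1 2 * a 0 2 * df 1 2 + a 2 2 * a 0 0 * df 2 0 + a 2 2 * a 0 1 * df 2 1 + a 2 2 * a 0 2 * df 2 2)) * hsη 2 0 2 +
      (F 2 * (a 0 0 * a 1 0 * df 0 0 + a 0 0 * a 1 1 * df 0 1 + a 0 0 * a 1 2 * df 0 2 + a 1 0 * a 1 0 * df 1 0 + a 1 0 * a 1 1 * df 1 1 + a 1 0 * a 1 2 * df 1 2 + a 2 0 * a 1 0 * df 2 0 + a 2 0 * a 1 1 * df 2 1 + a 2 0 * a 1 2 * df 2 2)) * hsη 2 1 0 +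
      (F 2 * (a 0 1 * a 1 0 * df 0 0 + a 0 1 * a 1 1 * df 0 1 + a 0 1 * a 1 2 * df 0 2 + a 1 1 * a 1 0 * df 1 0 + a 1 1 * a 1 1 * df 1 1 + a 1 1 * a 1 2 * df 1 2 + a 2 1 * a 1 0 * df 2 0 + a 2 1 * a 1 1 * df 2 1 + a 2 1 * a 1 2 * df 2 2)) * hsη 2 1 1 +
      (F 2 * (a 0 2 * a 1 0 * df 0 0 + a 0 2 * a 1 1 * df 0 1 + a 0 2 * a 1 2 * df 0 2 + a 1 2 * a 1 0 * df 1 0 + a 1 2 * a 1 1 * df 1 1 + a 1 2 * a 1 2 * df 1 2 + a 2 2 * a 1 0 * df 2 0 + a 2 2 * a 1 1 * df 2 1 + a 2 2 * a 1 2 * df 2 2)) * hsη 2 1 2 +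
      (F 2 * (a 0 0 * a 2 0 * df 0 0 + a 0 0 * a 2 1 * df 0 1 + a 0 0 * a 2 2 * df 0 2 + a 1 0 * a 2 0 * df 1 0 + a 1 0 * a 2 1 * df 1 1 + a 1 0 * a 2 2 * df 1 2 + a 2 0 * a 2 0 * df 2 0 + a 2 0 * a 2 1 * df 2 1 + a 2 0 * a 2 2 * df 2 2)) * hsη 2 2 0 +
      (F 2 * (a 0 1 * a 2 0 * df 0 0 + a 0 1 * a 2 1 * df 0 1 + a 0 1 * a 2 2 * df 0 2 + a 1 1 * a 2 0 * df 1 0 + a 1 1 * a 2 1 * df 1 1 + a 1 1 * a 2 2 * df 1 2 + a 2 1 * a 2 0 * df 2 0 + a 2 1 * a 2 1 * df 2 1 + a 2 1 * a 2 2 * df 2 2)) * hsη 2 2 1 +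
      (F 2 * (a 0 2 * a 2 0 * df 0 0 + a 0 2 * a 2 1 * df 0 1 + a 0 2 * a 2 2 * df 0 2 + a 1 2 * a 2 0 * df 1 0 + a 1 2 * a 2 1 * df 1 1 + a 1 2 * a 2 2 * df 1 2 + a 2 2 * a 2 0 * df 2 0 + a 2 2 * a 2 1 * df 2 1 + a 2 2 * a 2 2 * df 2 2)) * hsη 2 2 2

lemma fderiv_divsum {η f : (Fin 3 → ℝ) → (Fin 3 → ℝ)} (hη : ContDiff ℝ 2 η)
    (hinv : ∀ x, IsUnit (jacobian η x).det) (hf : ContDiff ℝ 2 f) (x : Fin 3 → ℝ) (k : Fin 3) :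
    fderiv ℝ (fun y => ∑ l : Fin 3, ∑ i : Fin 3,
        (jacobian η y)⁻¹ l i * fderiv ℝ (fun z => f z i) y (Pi.single l 1)) x (Pi.single k 1)
      = ∑ l : Fin 3, ∑ i : Fin 3,
          (fderiv ℝ (fun y => (jacobian η y)⁻¹ l i) x (Pi.single k 1)
              * fderiv ℝ (fun z => f z i) x (Pi.single l 1)
            + (jacobian η x)⁻¹ l i
              * fderiv ℝ (fun y => fderiv ℝ (fun z => f z i) y (Pi.single l 1)) x
                  (Pi.single k 1)) := by
  have hdinv : ∀ (y : Fin 3 → ℝ) (l i : Fin 3),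
      DifferentiableAt ℝ (fun y => (jacobian η y)⁻¹ l i) y := fun y l i =>
    ((invC1 hη hinv l i).differentiable one_ne_zero).differentiableAt
  have hdf : ∀ (y : Fin 3 → ℝ) (l i : Fin 3),
      DifferentiableAt ℝ (fun y => fderiv ℝ (fun z => f z i) y (Pi.single l 1)) y :=
    fun y l i => ((d1C1 (contDiff_pi.mp hf i) _).differentiable one_ne_zero).differentiableAt
  rw [fderiv_fun_sum (fun l _ => DifferentiableAt.fun_sum
    (fun i _ => ((hdinv x l i).fun_mul (hdf x l i))))]
  simp only [ContinuousLinearMap.sum_apply]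
  refine Finset.sum_congr rfl fun l _ => ?_
  rw [fderiv_fun_sum (fun i _ => (hdinv x l i).fun_mul (hdf x l i))]
  simp only [ContinuousLinearMap.sum_apply]
  refine Finset.sum_congr rfl fun i _ => ?_
  rw [fderiv_fun_mul (hdinv x l i) (hdf x l i)]
  simp only [ContinuousLinearMap.add_apply, ContinuousLinearMap.smul_apply, smul_eq_mul]
  ring

/-- **Commutator of `div_a` with the directional derivative `(F⁰·∂)`.**
For `η` of class `C²` with invertible Jacobian, `a = [∂η]⁻¹`, a `C¹` vector field `F⁰`
and a `C²` vector field `f`: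
`a^{li} ∂_l (F⁰_k ∂_k f_i) − F⁰_k ∂_k (a^{li} ∂_l f_i)
  = (a^{mi} ∂_m ((F⁰·∂)η_r)) (a^{lr} ∂_l f_i)`. -/
theorem div_a_directional_commutator
    (η : (Fin 3 → ℝ) → (Fin 3 → ℝ)) (hη : ContDiff ℝ 2 η)
    (hinv : ∀ x, IsUnit (jacobian η x).det)
    (F0 : (Fin 3 → ℝ) → (Fin 3 → ℝ)) (hF0 : ContDiff ℝ 1 F0)
    (f : (Fin 3 → ℝ) → (Fin 3 → ℝ)) (hf : ContDiff ℝ 2 f) :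
    ∀ x : Fin 3 → ℝ,
      (∑ l : Fin 3, ∑ i : Fin 3, (jacobian η x)⁻¹ l i *
          fderiv ℝ (fun y => ∑ k : Fin 3, F0 y k * fderiv ℝ (fun z => f z i) y (Pi.single k 1))
            x (Pi.single l 1)) -
        (∑ k : Fin 3, F0 x k *
          fderiv ℝ (fun y => ∑ l : Fin 3, ∑ i : Fin 3,
              (jacobian η y)⁻¹ l i * fderiv ℝ (fun z => f z i) y (Pi.single l 1))
            x (Pi.single k 1)) =
      ∑ i : Fin 3, ∑ r : Fin 3,
        (∑ m : Fin 3, (jacobian η x)⁻¹ m i *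
            fderiv ℝ (fun y => ∑ k : Fin 3, F0 y k * fderiv ℝ (fun z => η z r) y (Pi.single k 1))
              x (Pi.single m 1)) *
          (∑ l : Fin 3, (jacobian η x)⁻¹ l r * fderiv ℝ (fun z => f z i) x (Pi.single l 1)) := by
  intro x
  -- expand the inner directional-derivative sums
  have E1f : ∀ i l : Fin 3,
      fderiv ℝ (fun y => ∑ k : Fin 3, F0 y k * fderiv ℝ (fun z => f z i) y (Pi.single k 1))
          x (Pi.single l 1)
        = ∑ k : Fin 3, (fderiv ℝ (fun y => F0 y k) x (Pi.single l 1)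
              * fderiv ℝ (fun z => f z i) x (Pi.single k 1)
            + F0 x k * fderiv ℝ (fun y => fderiv ℝ (fun z => f z i) y (Pi.single k 1)) x
                (Pi.single l 1)) :=
    fun i l => fderiv_dirsum hF0 (contDiff_pi.mp hf i) x (Pi.single l 1)
  have E1η : ∀ r m : Fin 3,
      fderiv ℝ (fun y => ∑ k : Fin 3, F0 y k * fderiv ℝ (fun z => η z r) y (Pi.single k 1))
          x (Pi.single m 1)
        = ∑ k : Fin 3, (fderiv ℝ (fun y => F0 y k) x (Pi.single m 1)
              * fderiv ℝ (fun z => η z r) x (Pi.single k 1)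
            + F0 x k * fderiv ℝ (fun y => fderiv ℝ (fun z => η z r) y (Pi.single k 1)) x
                (Pi.single m 1)) :=
    fun r m => fderiv_dirsum hF0 (contDiff_pi.mp hη r) x (Pi.single m 1)
  have E2 := fderiv_divsum hη hinv hf x
  have Einv : ∀ k l i : Fin 3,
      fderiv ℝ (fun y => (jacobian η y)⁻¹ l i) x (Pi.single k 1)
        = -∑ m : Fin 3, (∑ r : Fin 3, (jacobian η x)⁻¹ l r *
              fderiv ℝ (fun y => fderiv ℝ (fun z => η z r) y (Pi.single m 1)) x (Pi.single k 1))
            * (jacobian η x)⁻¹ m i := by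
    intro k l i
    rw [inv_fderiv hη hinv x k l i]
    congr 1
    refine Finset.sum_congr rfl fun m _ => ?_
    congr 1
    refine Finset.sum_congr rfl fun j _ => ?_
    rw [jac_coord hη j m]
  have haN : ∀ l k : Fin 3,
      ∑ r : Fin 3, (jacobian η x)⁻¹ l r * fderiv ℝ (fun z => η z r) x (Pi.single k 1)
        = if l = k then 1 else 0 := by
    intro l k
    have : ∀ r : Fin 3, fderiv ℝ (fun z => η z r) x (Pi.single k 1) = jacobian η x r k :=
      fun r => (congrFun (jac_coord hη r k) x).symm
    simp only [this]
    rw [← Matrix.mul_apply, Matrix.nonsing_inv_mul _ (hinv x), Matrix.one_apply]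
  have hsf : ∀ (i k l : Fin 3),
      fderiv ℝ (fun y => fderiv ℝ (fun z => f z i) y (Pi.single l 1)) x (Pi.single k 1)
        = fderiv ℝ (fun y => fderiv ℝ (fun z => f z i) y (Pi.single k 1)) x (Pi.single l 1) :=
    fun i k l => symm2 (contDiff_pi.mp hf i) x _ _
  have hsη : ∀ (r k m : Fin 3),
      fderiv ℝ (fun y => fderiv ℝ (fun z => η z r) y (Pi.single m 1)) x (Pi.single k 1)
        = fderiv ℝ (fun y => fderiv ℝ (fun z => η z r) y (Pi.single k 1)) x (Pi.single m 1) :=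
    fun r k m => symm2 (contDiff_pi.mp hη r) x _ _
  simp only [E1f, E1η, E2, Einv]
  exact algebra_main (fun l i => (jacobian η x)⁻¹ l i)
    (fun r k => fderiv ℝ (fun z => η z r) x (Pi.single k 1))
    (fun l k => fderiv ℝ (fun y => F0 y k) x (Pi.single l 1))
    (fun l i => fderiv ℝ (fun z => f z i) x (Pi.single l 1))
    (fun k => F0 x k)
    (fun l k i => fderiv ℝ (fun y => fderiv ℝ (fun z => f z i) y (Pi.single k 1)) x
        (Pi.single l 1))
    (fun p q r => fderiv ℝ (fun y => fderiv ℝ (fun z => η z r) y (Pi.single q 1)) x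
        (Pi.single p 1))
    haN (fun k l i => hsf i k l) (fun k m r => hsη r k m)
end
end

section
/- Let η(t,y) be smooth with invertible Jacobian, v = ∂_t η, a = [∂η]^{-1}, F⁰ a time-independent C¹ vector field, h(t,y) a smooth scalar function, and e a smooth function of one variable. Assume the continuity equation div_a v = − e'(h) ∂_t h. Then the quantity div_a((F⁰·∂)η) + e'(h)(F⁰·∂)h is constant in time: ∂_t [ a^{li} ∂_l (F⁰_k ∂_k η_i) + e'(h) F⁰_k ∂_k h ] = 0. In particular, if initially div F⁰ = −e'(h(0))(F⁰·∂)h(0) and η(0,·)=Id, then div_a((F⁰·∂)η)(t) = −e'(h(t))(F⁰·∂)h(t) for all t (propagation of the divergence constraint on the deformation tensor). -/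
noncomputable section


/-- `div_a ((F⁰·∂)η)` at `p`, i.e. `a^{li} ∂_l (F⁰_k ∂_k η_i)` with `a = [∂η]⁻¹`. -/
def divaDirEta (η : ℝ × (Fin 3 → ℝ) → (Fin 3 → ℝ)) (F0 : (Fin 3 → ℝ) → (Fin 3 → ℝ))
    (p : ℝ × (Fin 3 → ℝ)) : ℝ :=
  ∑ l : Fin 3, ∑ i : Fin 3, (sjac η p)⁻¹ l i *
    fderiv ℝ (fun q => ∑ k : Fin 3, F0 q.2 k * fderiv ℝ η q ((0 : ℝ), Pi.single k 1) i)
      p ((0 : ℝ), Pi.single l 1)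

/-- `(F⁰·∂)h` at `p`, i.e. `F⁰_k ∂_k h`. -/
def dirH (F0 : (Fin 3 → ℝ) → (Fin 3 → ℝ)) (h : ℝ × (Fin 3 → ℝ) → ℝ)
    (p : ℝ × (Fin 3 → ℝ)) : ℝ :=
  ∑ k : Fin 3, F0 p.2 k * fderiv ℝ h p ((0 : ℝ), Pi.single k 1)


namespace DivProp

abbrev E3 : Type := ℝ × (Fin 3 → ℝ)


lemma one_le_inf : (1 : WithTop ℕ∞) ≤ ((⊤:ℕ∞) : WithTop ℕ∞) := by
  rw [show ((1:WithTop ℕ∞)) = ((1:ℕ∞):WithTop ℕ∞) from rfl]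
  exact WithTop.coe_le_coe.mpr le_top

lemma two_le_inf : (2 : WithTop ℕ∞) ≤ ((⊤:ℕ∞) : WithTop ℕ∞) := by
  rw [show ((2:WithTop ℕ∞)) = ((2:ℕ∞):WithTop ℕ∞) from rfl]
  exact WithTop.coe_le_coe.mpr le_top

/-- directional derivative -/
def pd (u : E3) (f : E3 → ℝ) : E3 → ℝ := fun p => fderiv ℝ f p u

def es (l : Fin 3) : E3 := ((0 : ℝ), Pi.single l 1)
def et : E3 := ((1 : ℝ), 0)

lemma pd_smooth {f : E3 → ℝ} (hf : ContDiff ℝ (⊤ : ℕ∞) f) (u : E3) :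
    ContDiff ℝ (⊤ : ℕ∞) (pd u f) :=
  (hf.fderiv_right (m := (⊤:ℕ∞)) (by simp)).clm_apply contDiff_const

lemma pd_comm {f : E3 → ℝ} (hf : ContDiff ℝ (⊤ : ℕ∞) f) (u w : E3) (p : E3) :
    pd u (pd w f) p = pd w (pd u f) p := by
  have hd : DifferentiableAt ℝ (fderiv ℝ f) p :=
    ((hf.fderiv_right (m := (⊤:ℕ∞)) (by simp)).differentiable (by simp)).differentiableAt
  have key : ∀ a b : E3, pd a (pd b f) p = fderiv ℝ (fderiv ℝ f) p a b := by
    intro a b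
    have : fderiv ℝ (fun q => (fderiv ℝ f q) b) p =
        (fderiv ℝ f p).comp (fderiv ℝ (fun _ : E3 => b) p) +
          (fderiv ℝ (fderiv ℝ f) p).flip b :=
      fderiv_clm_apply hd (differentiableAt_const b)
    show fderiv ℝ (fun q => (fderiv ℝ f q) b) p a = _
    rw [this]
    simp [fderiv_const]
  rw [key u w, key w u]
  exact (hf.contDiffAt.isSymmSndFDerivAt (by rw [minSmoothness_of_isRCLikeNormedField]; exact two_le_inf)) u w


lemma diffAt_of_smooth {f : E3 → ℝ} (hf : ContDiff ℝ (⊤ : ℕ∞) f) (p : E3) :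
    DifferentiableAt ℝ f p := (hf.differentiable (by simp)).differentiableAt

lemma pd_add {f g : E3 → ℝ} {p : E3} (hf : DifferentiableAt ℝ f p)
    (hg : DifferentiableAt ℝ g p) (u : E3) :
    pd u (fun q => f q + g q) p = pd u f p + pd u g p := by
  simp [pd, fderiv_fun_add hf hg]

lemma pd_mul {f g : E3 → ℝ} {p : E3} (hf : DifferentiableAt ℝ f p)
    (hg : DifferentiableAt ℝ g p) (u : E3) :
    pd u (fun q => f q * g q) p = pd u f p * g p + f p * pd u g p := by
  simp only [pd, fderiv_fun_mul hf hg, ContinuousLinearMap.add_apply,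
    ContinuousLinearMap.smul_apply, smul_eq_mul]
  ring

lemma pd_const (c : ℝ) (u : E3) (p : E3) : pd u (fun _ => c) p = 0 := by
  simp [pd, fderiv_const]

lemma pd_sum {f : Fin 3 → E3 → ℝ} {p : E3} (hf : ∀ k, DifferentiableAt ℝ (f k) p) (u : E3) :
    pd u (fun q => ∑ k : Fin 3, f k q) p = ∑ k : Fin 3, pd u (f k) p := by
  simp [pd, fderiv_fun_sum (fun k _ => hf k)]

lemma fderiv_comp_pi {X : Type} [NormedAddCommGroup X] [NormedSpace ℝ X]
    {φ : X → (Fin 3 → ℝ)} {p : X} (hφ : DifferentiableAt ℝ φ p)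
    (u : X) (i : Fin 3) :
    fderiv ℝ φ p u i = fderiv ℝ (fun q => φ q i) p u := by
  have h : ∀ j : Fin 3, DifferentiableAt ℝ (fun q => φ q j) p := fun j =>
    (ContinuousLinearMap.differentiableAt (ContinuousLinearMap.proj (R := ℝ)
      (φ := fun _ : Fin 3 => ℝ) j)).comp p hφ
  have hp := fderiv_pi (𝕜 := ℝ) (φ := fun j q => φ q j) (x := p) h
  calc fderiv ℝ φ p u i = fderiv ℝ (fun x j => φ x j) p u i := rfl
    _ = fderiv ℝ (fun q => φ q i) p u := by rw [hp]; simp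


lemma contDiff_det3 {M : E3 → Matrix (Fin 3) (Fin 3) ℝ}
    (hM : ∀ i j, ContDiff ℝ (⊤ : ℕ∞) fun p => M p i j) :
    ContDiff ℝ (⊤ : ℕ∞) fun p => (M p).det := by
  have : (fun p => (M p).det) =
      fun p => ∑ σ : Equiv.Perm (Fin 3),
        (((Equiv.Perm.sign σ : ℤ) : ℝ)) * ∏ i, M p (σ i) i := by
    funext p; exact Matrix.det_apply' _
  rw [this]
  exact ContDiff.sum fun σ _ =>
    contDiff_const.mul (contDiff_prod fun i _ => hM (σ i) i)

lemma contDiff_adjugate3 {M : E3 → Matrix (Fin 3) (Fin 3) ℝ}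
    (hM : ∀ i j, ContDiff ℝ (⊤ : ℕ∞) fun p => M p i j) (l i : Fin 3) :
    ContDiff ℝ (⊤ : ℕ∞) fun p => (M p).adjugate l i := by
  have : (fun p => (M p).adjugate l i) =
      fun p => ((M p).updateRow i (Pi.single l 1)).det := by
    funext p; exact Matrix.adjugate_apply _ _ _
  rw [this]
  apply contDiff_det3
  intro a b
  rcases eq_or_ne a i with rfl | hne
  · simpa [Matrix.updateRow_apply] using contDiff_const
  · simpa [Matrix.updateRow_apply, hne] using hM a b

lemma contDiff_inv_entry {M : E3 → Matrix (Fin 3) (Fin 3) ℝ}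
    (hM : ∀ i j, ContDiff ℝ (⊤ : ℕ∞) fun p => M p i j)
    (hdet : ∀ p, (M p).det ≠ 0) (l i : Fin 3) :
    ContDiff ℝ (⊤ : ℕ∞) fun p => (M p)⁻¹ l i := by
  have : (fun p => (M p)⁻¹ l i) =
      fun p => ((M p).det)⁻¹ * (M p).adjugate l i := by
    funext p
    rw [Matrix.inv_def, Matrix.smul_apply, Ring.inverse_eq_inv, smul_eq_mul]
  rw [this]
  exact ((contDiff_det3 hM).inv hdet).mul (contDiff_adjugate3 hM l i)


section Setting

variable (eta : E3 → (Fin 3 → ℝ)) (F0 : (Fin 3 → ℝ) → (Fin 3 → ℝ))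

def ec (i : Fin 3) : E3 → ℝ := fun q => eta q i
def Af (i l : Fin 3) : E3 → ℝ := pd (es l) (ec eta i)
def vv (i : Fin 3) : E3 → ℝ := pd et (ec eta i)
def Bf (l i : Fin 3) : E3 → ℝ := fun p => (sjac eta p)⁻¹ l i
def Ff (k : Fin 3) : E3 → ℝ := fun p => F0 p.2 k
def Wf (i : Fin 3) : E3 → ℝ := fun p => ∑ k : Fin 3, Ff F0 k p * Af eta i k p
def Vf (i : Fin 3) : E3 → ℝ := fun p => ∑ k : Fin 3, Ff F0 k p * pd (es k) (vv eta i) p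

variable {eta F0}

section Smooth
variable (hη : ContDiff ℝ (⊤ : ℕ∞) eta) (hF0 : ContDiff ℝ (⊤ : ℕ∞) F0)
include hη

lemma hec (i : Fin 3) : ContDiff ℝ (⊤ : ℕ∞) (ec eta i) := contDiff_pi.1 hη i

lemma hAf (i l : Fin 3) : ContDiff ℝ (⊤ : ℕ∞) (Af eta i l) := pd_smooth (hec hη i) _

lemma hvv (i : Fin 3) : ContDiff ℝ (⊤ : ℕ∞) (vv eta i) := pd_smooth (hec hη i) _

lemma sjac_apply (p : E3) (i l : Fin 3) : sjac eta p i l = Af eta i l p :=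
  fderiv_comp_pi ((hη.differentiable (by simp)).differentiableAt) _ _

lemma sjac_entry_smooth (i l : Fin 3) :
    ContDiff ℝ (⊤ : ℕ∞) (fun p => sjac eta p i l) := by
  have : (fun p => sjac eta p i l) = Af eta i l := funext fun p => sjac_apply hη p i l
  rw [this]; exact hAf hη i l

omit hη in
include hF0 in
lemma hFf (k : Fin 3) : ContDiff ℝ (⊤ : ℕ∞) (Ff F0 k) :=
  (contDiff_pi.1 hF0 k).comp contDiff_snd

include hF0 in
lemma hWf (i : Fin 3) : ContDiff ℝ (⊤ : ℕ∞) (Wf eta F0 i) :=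
  ContDiff.sum fun k _ => (hFf hF0 k).mul (hAf hη i k)

include hF0 in
lemma hVf (i : Fin 3) : ContDiff ℝ (⊤ : ℕ∞) (Vf eta F0 i) :=
  ContDiff.sum fun k _ => (hFf hF0 k).mul (pd_smooth (hvv hη i) _)

end Smooth

section Inverse
variable (hη : ContDiff ℝ (⊤ : ℕ∞) eta) (hinv : ∀ p, IsUnit (sjac eta p).det)
include hη hinv

lemma hBf (l i : Fin 3) : ContDiff ℝ (⊤ : ℕ∞) (Bf eta l i) :=
  contDiff_inv_entry (fun i l => sjac_entry_smooth hη i l)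
    (fun p => (isUnit_iff_ne_zero.1 (hinv p))) l i

lemma hBA (p : E3) (l k : Fin 3) :
    ∑ i : Fin 3, Bf eta l i p * Af eta i k p = if l = k then 1 else 0 := by
  have hm := Matrix.nonsing_inv_mul _ (hinv p)
  have := congrFun (congrFun hm l) k
  rw [Matrix.mul_apply] at this
  simp only [Matrix.one_apply] at this
  calc ∑ i : Fin 3, Bf eta l i p * Af eta i k p
      = ∑ i : Fin 3, (sjac eta p)⁻¹ l i * sjac eta p i k := by
        refine Finset.sum_congr rfl fun i _ => ?_
        rw [sjac_apply hη p i k]; rfl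
    _ = if l = k then 1 else 0 := this

lemma hAB (p : E3) (i j : Fin 3) :
    ∑ k : Fin 3, Af eta i k p * Bf eta k j p = if i = j then 1 else 0 := by
  have hm := Matrix.mul_nonsing_inv _ (hinv p)
  have := congrFun (congrFun hm i) j
  rw [Matrix.mul_apply] at this
  simp only [Matrix.one_apply] at this
  calc ∑ k : Fin 3, Af eta i k p * Bf eta k j p
      = ∑ k : Fin 3, sjac eta p i k * (sjac eta p)⁻¹ k j := by
        refine Finset.sum_congr rfl fun k _ => ?_
        rw [sjac_apply hη p i k]; rfl
    _ = if i = j then 1 else 0 := this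

lemma pdB (u : E3) (p : E3) (l j : Fin 3) :
    pd u (Bf eta l j) p =
      -∑ k : Fin 3, ∑ i : Fin 3, Bf eta l i p * pd u (Af eta i k) p * Bf eta k j p := by
  have hdB : ∀ a b, DifferentiableAt ℝ (Bf eta a b) p :=
    fun a b => diffAt_of_smooth (hBf hη hinv a b) p
  have hdA : ∀ a b, DifferentiableAt ℝ (Af eta a b) p :=
    fun a b => diffAt_of_smooth (hAf hη a b) p
  have h0 : ∀ k, ∑ i : Fin 3,
      (pd u (Bf eta l i) p * Af eta i k p + Bf eta l i p * pd u (Af eta i k) p) = 0 := by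
    intro k
    have hconst : (fun q => ∑ i : Fin 3, Bf eta l i q * Af eta i k q) =
        fun _ => (if l = k then (1:ℝ) else 0) := funext fun q => hBA hη hinv q l k
    have : pd u (fun q => ∑ i : Fin 3, Bf eta l i q * Af eta i k q) p = 0 := by
      rw [hconst]; exact pd_const _ u p
    rw [pd_sum (f := fun i q => Bf eta l i q * Af eta i k q) (fun i => (hdB l i).mul (hdA i k)) u] at this
    calc ∑ i : Fin 3, (pd u (Bf eta l i) p * Af eta i k p + Bf eta l i p * pd u (Af eta i k) p)
        = ∑ i : Fin 3, pd u (fun q => Bf eta l i q * Af eta i k q) p := by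
          refine Finset.sum_congr rfl fun i _ => ?_
          rw [pd_mul (hdB l i) (hdA i k)]
      _ = 0 := this
  have h0' : ∀ k, ∑ i : Fin 3, pd u (Bf eta l i) p * Af eta i k p =
      -∑ i : Fin 3, Bf eta l i p * pd u (Af eta i k) p := by
    intro k
    have := h0 k
    rw [Finset.sum_add_distrib] at this
    linarith
  calc pd u (Bf eta l j) p
      = ∑ i : Fin 3, (if i = j then pd u (Bf eta l i) p else 0) := by
        rw [Finset.sum_ite_eq' Finset.univ j (fun i => pd u (Bf eta l i) p)]
        simp
    _ = ∑ i : Fin 3, pd u (Bf eta l i) p * (∑ k : Fin 3, Af eta i k p * Bf eta k j p) := by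
        refine Finset.sum_congr rfl fun i _ => ?_
        rw [hAB hη hinv p i j]
        split <;> ring
    _ = ∑ i : Fin 3, ∑ k : Fin 3, pd u (Bf eta l i) p * Af eta i k p * Bf eta k j p := by
        refine Finset.sum_congr rfl fun i _ => ?_
        rw [Finset.mul_sum]; refine Finset.sum_congr rfl fun k _ => by ring
    _ = ∑ k : Fin 3, (∑ i : Fin 3, pd u (Bf eta l i) p * Af eta i k p) * Bf eta k j p := by
        rw [Finset.sum_comm]
        refine Finset.sum_congr rfl fun k _ => by rw [Finset.sum_mul]
    _ = ∑ k : Fin 3, (-∑ i : Fin 3, Bf eta l i p * pd u (Af eta i k) p) * Bf eta k j p := by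
        refine Finset.sum_congr rfl fun k _ => by rw [h0' k]
    _ = -∑ k : Fin 3, ∑ i : Fin 3, Bf eta l i p * pd u (Af eta i k) p * Bf eta k j p := by
        rw [← Finset.sum_neg_distrib]
        refine Finset.sum_congr rfl fun k _ => ?_
        rw [neg_mul, Finset.sum_mul]

end Inverse


section Derivs
variable {eta : E3 → (Fin 3 → ℝ)} {F0 : (Fin 3 → ℝ) → (Fin 3 → ℝ)}

lemma pd_Ff (hF0 : ContDiff ℝ (⊤ : ℕ∞) F0) (k : Fin 3) (u p : E3) :
    pd u (Ff F0 k) p = fderiv ℝ (fun y => F0 y k) p.2 u.2 := by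
  have hk : DifferentiableAt ℝ (fun y => F0 y k) p.2 :=
    ((contDiff_pi.1 hF0 k).differentiable (by simp)).differentiableAt
  have hc : HasFDerivAt ((fun y => F0 y k) ∘ Prod.snd)
      ((fderiv ℝ (fun y => F0 y k) p.2).comp
        (ContinuousLinearMap.snd ℝ ℝ (Fin 3 → ℝ))) p :=
    hk.hasFDerivAt.comp p hasFDerivAt_snd
  show fderiv ℝ ((fun y => F0 y k) ∘ Prod.snd) p u = _
  rw [hc.fderiv]
  rfl

lemma pd_et_Ff (hF0 : ContDiff ℝ (⊤ : ℕ∞) F0) (k : Fin 3) (p : E3) :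
    pd et (Ff F0 k) p = 0 := by
  rw [pd_Ff hF0]
  show fderiv ℝ (fun y => F0 y k) p.2 0 = 0
  simp

lemma pd_et_Af (hη : ContDiff ℝ (⊤ : ℕ∞) eta) (i k : Fin 3) (p : E3) :
    pd et (Af eta i k) p = pd (es k) (vv eta i) p :=
  pd_comm (hec hη i) et (es k) p

lemma diff_Ff (hF0 : ContDiff ℝ (⊤ : ℕ∞) F0) (k : Fin 3) (p : E3) :
    DifferentiableAt ℝ (Ff F0 k) p := diffAt_of_smooth (hFf hF0 k) p

lemma pd_Wf (hη : ContDiff ℝ (⊤ : ℕ∞) eta) (hF0 : ContDiff ℝ (⊤ : ℕ∞) F0)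
    (i : Fin 3) (u p : E3) :
    pd u (Wf eta F0 i) p = ∑ m : Fin 3,
      (pd u (Ff F0 m) p * Af eta i m p + Ff F0 m p * pd u (Af eta i m) p) := by
  rw [show Wf eta F0 i = fun p => ∑ m : Fin 3, Ff F0 m p * Af eta i m p from rfl,
    pd_sum (f := fun m q => Ff F0 m q * Af eta i m q) (fun m => (diff_Ff hF0 m p).mul (diffAt_of_smooth (hAf hη i m) p)) u]
  exact Finset.sum_congr rfl fun m _ =>
    pd_mul (diff_Ff hF0 m p) (diffAt_of_smooth (hAf hη i m) p) u

lemma pd_Vf (hη : ContDiff ℝ (⊤ : ℕ∞) eta) (hF0 : ContDiff ℝ (⊤ : ℕ∞) F0)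
    (i : Fin 3) (u p : E3) :
    pd u (Vf eta F0 i) p = ∑ m : Fin 3,
      (pd u (Ff F0 m) p * pd (es m) (vv eta i) p
        + Ff F0 m p * pd u (pd (es m) (vv eta i)) p) := by
  rw [show Vf eta F0 i = fun p => ∑ m : Fin 3, Ff F0 m p * pd (es m) (vv eta i) p from rfl,
    pd_sum (f := fun m q => Ff F0 m q * pd (es m) (vv eta i) q) (fun m => (diff_Ff hF0 m p).mul
      (diffAt_of_smooth (pd_smooth (hvv hη i) _) p)) u]
  exact Finset.sum_congr rfl fun m _ =>
    pd_mul (diff_Ff hF0 m p) (diffAt_of_smooth (pd_smooth (hvv hη i) _) p) u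

lemma pd_Wf_t (hη : ContDiff ℝ (⊤ : ℕ∞) eta) (hF0 : ContDiff ℝ (⊤ : ℕ∞) F0)
    (i : Fin 3) (p : E3) :
    pd et (Wf eta F0 i) p = Vf eta F0 i p := by
  rw [pd_Wf hη hF0 i et p]
  refine Finset.sum_congr rfl fun m _ => ?_
  rw [pd_et_Ff hF0, pd_et_Af hη]
  ring

section Echain
variable {h : E3 → ℝ} {e : ℝ → ℝ}
variable (hh : ContDiff ℝ (⊤ : ℕ∞) h) (he : ContDiff ℝ 2 e)
include hh he

lemma hasF_de (p : E3) : HasFDerivAt (fun q => deriv e (h q))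
    (deriv (deriv e) (h p) • fderiv ℝ h p) p := by
  have h2 : ContDiff ℝ (1 : ℕ) (deriv e) := by
    have := (contDiff_succ_iff_deriv (n := 1)).mp (by exact_mod_cast he)
    exact this.2.2
  have hd : HasDerivAt (deriv e) (deriv (deriv e) (h p)) (h p) :=
    ((h2.differentiable (by simp)).differentiableAt).hasDerivAt
  exact hd.comp_hasFDerivAt p (diffAt_of_smooth hh p).hasFDerivAt

lemma diff_de (p : E3) : DifferentiableAt ℝ (fun q => deriv e (h q)) p :=
  (hasF_de hh he p).differentiableAt

lemma pd_de (u p : E3) :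
    pd u (fun q => deriv e (h q)) p = deriv (deriv e) (h p) * pd u h p := by
  show fderiv ℝ (fun q => deriv e (h q)) p u = _
  rw [(hasF_de hh he p).fderiv]
  rfl

end Echain

end Derivs

end Setting

set_option maxHeartbeats 1000000 in
lemma key_algebra (B A S D : Fin 3 → Fin 3 → ℝ) (T U : Fin 3 → Fin 3 → Fin 3 → ℝ)
    (f hk hkk : Fin 3 → ℝ) (c1 c2 ht : ℝ)
    (hBA : ∀ m m' : Fin 3, ∑ i : Fin 3, B m i * A i m' = if m = m' then 1 else 0)
    (hT : ∀ i k l : Fin 3, T i k l = T i l k) (hU : ∀ i k l : Fin 3, U i k l = U i l k) :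
    (∑ l : Fin 3, ∑ i : Fin 3,
        ((-∑ m : Fin 3, ∑ r : Fin 3, B l r * S r m * B m i)
            * (∑ m : Fin 3, (D m l * A i m + f m * T i m l))
          + B l i * (∑ m : Fin 3, (D m l * S i m + f m * U i m l))))
      + (c2 * ht * (∑ k : Fin 3, f k * hk k) + c1 * (∑ k : Fin 3, f k * hkk k))
    = ∑ k : Fin 3, f k *
        ((∑ l : Fin 3, ∑ i : Fin 3,
            ((-∑ m : Fin 3, ∑ r : Fin 3, B l r * T r m k * B m i) * S i l
              + B l i * U i l k))
          + (c2 * hk k * ht + c1 * hkk k)) := by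
  have r00 : B 0 0 * A 0 0 + B 0 1 * A 1 0 + B 0 2 * A 2 0 = 1 := by
    simpa [Fin.sum_univ_three] using hBA 0 0
  have r01 : B 0 0 * A 0 1 + B 0 1 * A 1 1 + B 0 2 * A 2 1 = 0 := by
    simpa [Fin.sum_univ_three] using hBA 0 1
  have r02 : B 0 0 * A 0 2 + B 0 1 * A 1 2 + B 0 2 * A 2 2 = 0 := by
    simpa [Fin.sum_univ_three] using hBA 0 2
  have r10 : B 1 0 * A 0 0 + B 1 1 * A 1 0 + B 1 2 * A 2 0 = 0 := by
    simpa [Fin.sum_univ_three] using hBA 1 0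
  have r11 : B 1 0 * A 0 1 + B 1 1 * A 1 1 + B 1 2 * A 2 1 = 1 := by
    simpa [Fin.sum_univ_three] using hBA 1 1
  have r12 : B 1 0 * A 0 2 + B 1 1 * A 1 2 + B 1 2 * A 2 2 = 0 := by
    simpa [Fin.sum_univ_three] using hBA 1 2
  have r20 : B 2 0 * A 0 0 + B 2 1 * A 1 0 + B 2 2 * A 2 0 = 0 := by
    simpa [Fin.sum_univ_three] using hBA 2 0
  have r21 : B 2 0 * A 0 1 + B 2 1 * A 1 1 + B 2 2 * A 2 1 = 0 := by
    simpa [Fin.sum_univ_three] using hBA 2 1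
  have r22 : B 2 0 * A 0 2 + B 2 1 * A 1 2 + B 2 2 * A 2 2 = 1 := by
    simpa [Fin.sum_univ_three] using hBA 2 2
  simp only [Fin.sum_univ_three]
  simp only [show ∀ i, T i 1 0 = T i 0 1 from fun i => hT i 1 0,
    show ∀ i, T i 2 0 = T i 0 2 from fun i => hT i 2 0,
    show ∀ i, T i 2 1 = T i 1 2 from fun i => hT i 2 1,
    show ∀ i, U i 1 0 = U i 0 1 from fun i => hU i 1 0,
    show ∀ i, U i 2 0 = U i 0 2 from fun i => hU i 2 0,
    show ∀ i, U i 2 1 = U i 1 2 from fun i => hU i 2 1]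
  linear_combination (norm := ring1)
    (-(B 0 0 * S 0 0 * D 0 0 + B 0 1 * S 1 0 * D 0 0 + B 0 2 * S 2 0 * D 0 0 + B 1 0 * S 0 0 * D 0 1 + B 1 1 * S 1 0 * D 0 1 + B 1 2 * S 2 0 * D 0 1 + B 2 0 * S 0 0 * D 0 2 + B 2 1 * S 1 0 * D 0 2 + B 2 2 * S 2 0 * D 0 2)) * r00
    + (-(B 0 0 * S 0 0 * D 1 0 + B 0 1 * S 1 0 * D 1 0 + B 0 2 * S 2 0 * D 1 0 + B 1 0 * S 0 0 * D 1 1 + B 1 1 * S 1 0 * D 1 1 + B 1 2 * S 2 0 * D 1 1 + B 2 0 * S 0 0 * D 1 2 + B 2 1 * S 1 0 * D 1 2 + B 2 2 * S 2 0 * D 1 2)) * r01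
    + (-(B 0 0 * S 0 0 * D 2 0 + B 0 1 * S 1 0 * D 2 0 + B 0 2 * S 2 0 * D 2 0 + B 1 0 * S 0 0 * D 2 1 + B 1 1 * S 1 0 * D 2 1 + B 1 2 * S 2 0 * D 2 1 + B 2 0 * S 0 0 * D 2 2 + B 2 1 * S 1 0 * D 2 2 + B 2 2 * S 2 0 * D 2 2)) * r02
    + (-(B 0 0 * S 0 1 * D 0 0 + B 0 1 * S 1 1 * D 0 0 + B 0 2 * S 2 1 * D 0 0 + B 1 0 * S 0 1 * D 0 1 + B 1 1 * S 1 1 * D 0 1 + B 1 2 * S 2 1 * D 0 1 + B 2 0 * S 0 1 * D 0 2 + B 2 1 * S 1 1 * D 0 2 + B 2 2 * S 2 1 * D 0 2)) * r10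
    + (-(B 0 0 * S 0 1 * D 1 0 + B 0 1 * S 1 1 * D 1 0 + B 0 2 * S 2 1 * D 1 0 + B 1 0 * S 0 1 * D 1 1 + B 1 1 * S 1 1 * D 1 1 + B 1 2 * S 2 1 * D 1 1 + B 2 0 * S 0 1 * D 1 2 + B 2 1 * S 1 1 * D 1 2 + B 2 2 * S 2 1 * D 1 2)) * r11
    + (-(B 0 0 * S 0 1 * D 2 0 + B 0 1 * S 1 1 * D 2 0 + B 0 2 * S 2 1 * D 2 0 + B 1 0 * S 0 1 * D 2 1 + B 1 1 * S 1 1 * D 2 1 + B 1 2 * S 2 1 * D 2 1 + B 2 0 * S 0 1 * D 2 2 + B 2 1 * S 1 1 * D 2 2 + B 2 2 * S 2 1 * D 2 2)) * r12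
    + (-(B 0 0 * S 0 2 * D 0 0 + B 0 1 * S 1 2 * D 0 0 + B 0 2 * S 2 2 * D 0 0 + B 1 0 * S 0 2 * D 0 1 + B 1 1 * S 1 2 * D 0 1 + B 1 2 * S 2 2 * D 0 1 + B 2 0 * S 0 2 * D 0 2 + B 2 1 * S 1 2 * D 0 2 + B 2 2 * S 2 2 * D 0 2)) * r20
    + (-(B 0 0 * S 0 2 * D 1 0 + B 0 1 * S 1 2 * D 1 0 + B 0 2 * S 2 2 * D 1 0 + B 1 0 * S 0 2 * D 1 1 + B 1 1 * S 1 2 * D 1 1 + B 1 2 * S 2 2 * D 1 1 + B 2 0 * S 0 2 * D 1 2 + B 2 1 * S 1 2 * D 1 2 + B 2 2 * S 2 2 * D 1 2)) * r21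
    + (-(B 0 0 * S 0 2 * D 2 0 + B 0 1 * S 1 2 * D 2 0 + B 0 2 * S 2 2 * D 2 0 + B 1 0 * S 0 2 * D 2 1 + B 1 1 * S 1 2 * D 2 1 + B 1 2 * S 2 2 * D 2 1 + B 2 0 * S 0 2 * D 2 2 + B 2 1 * S 1 2 * D 2 2 + B 2 2 * S 2 2 * D 2 2)) * r22

end DivProp

open DivProp in
/-- **Propagation of the divergence constraint on the deformation tensor.** -/
theorem divergence_constraint_propagates
    (η : ℝ × (Fin 3 → ℝ) → (Fin 3 → ℝ)) (hη : ContDiff ℝ (⊤ : ℕ∞) η)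
    (hinv : ∀ p, IsUnit (sjac η p).det)
    (hη0 : ∀ y, η (0, y) = y)
    (F0 : (Fin 3 → ℝ) → (Fin 3 → ℝ)) (hF0 : ContDiff ℝ (⊤ : ℕ∞) F0)
    (h : ℝ × (Fin 3 → ℝ) → ℝ) (hh : ContDiff ℝ (⊤ : ℕ∞) h)
    (e : ℝ → ℝ) (he : ContDiff ℝ 2 e)
    (hcont : ∀ p : ℝ × (Fin 3 → ℝ),
      ∑ l : Fin 3, ∑ i : Fin 3, (sjac η p)⁻¹ l i *
          fderiv ℝ (fun q => fderiv ℝ η q ((1 : ℝ), 0) i) p ((0 : ℝ), Pi.single l 1) =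
        - deriv e (h p) * fderiv ℝ h p ((1 : ℝ), 0)) :
    (∀ p : ℝ × (Fin 3 → ℝ),
        fderiv ℝ (fun q => divaDirEta η F0 q + deriv e (h q) * dirH F0 h q) p ((1 : ℝ), 0) = 0) ∧
      ((∀ y : Fin 3 → ℝ,
          ∑ k : Fin 3, fderiv ℝ F0 y (Pi.single k 1) k =
            - deriv e (h (0, y)) * dirH F0 h (0, y)) →
        ∀ p : ℝ × (Fin 3 → ℝ), divaDirEta η F0 p = - deriv e (h p) * dirH F0 h p) := by
  have hdiffη : ∀ q : E3, DifferentiableAt ℝ η q :=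
    fun q => (hη.differentiable (by simp)).differentiableAt
  have hde1 : ∀ p : E3, DifferentiableAt ℝ (fun q => deriv e (h q)) p := diff_de hh he
  have hdBf : ∀ l i : Fin 3, ContDiff ℝ (⊤ : ℕ∞) (Bf η l i) := hBf hη hinv
  have hdWfl : ∀ i l : Fin 3, ContDiff ℝ (⊤ : ℕ∞) (pd (es l) (Wf η F0 i)) :=
    fun i l => pd_smooth (hWf hη hF0 i) _
  have hdirHs : ContDiff ℝ (⊤ : ℕ∞) (fun q => ∑ k : Fin 3, Ff F0 k q * pd (es k) h q) :=
    ContDiff.sum fun k _ => (hFf hF0 k).mul (pd_smooth hh _)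
  have hG1s : ContDiff ℝ (⊤ : ℕ∞)
      (fun q => ∑ l : Fin 3, ∑ i : Fin 3, Bf η l i q * pd (es l) (Wf η F0 i) q) :=
    ContDiff.sum fun l _ => ContDiff.sum fun i _ => (hdBf l i).mul (hdWfl i l)
  have hG2d : ∀ p : E3, DifferentiableAt ℝ
      (fun q => deriv e (h q) * ∑ k : Fin 3, Ff F0 k q * pd (es k) h q) p :=
    fun p => (hde1 p).mul (diffAt_of_smooth hdirHs p)
  have hvfun : ∀ i : Fin 3, (fun q => fderiv ℝ η q ((1 : ℝ), 0) i) = vv η i :=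
    fun i => funext fun q => fderiv_comp_pi (hdiffη q) _ i
  have hWfun : ∀ i : Fin 3,
      (fun q => ∑ k : Fin 3, F0 q.2 k * fderiv ℝ η q ((0 : ℝ), Pi.single k 1) i)
        = Wf η F0 i := fun i => funext fun q => Finset.sum_congr rfl fun k _ => by
    rw [fderiv_comp_pi (hdiffη q) ((0 : ℝ), Pi.single k 1) i]; rfl
  have hdiva : ∀ p : E3, divaDirEta η F0 p
      = ∑ l : Fin 3, ∑ i : Fin 3, Bf η l i p * pd (es l) (Wf η F0 i) p :=
    fun p => Finset.sum_congr rfl fun l _ => Finset.sum_congr rfl fun i _ => by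
      rw [hWfun i]; rfl
  have hfun : (fun q => divaDirEta η F0 q + deriv e (h q) * dirH F0 h q)
      = (fun q => (∑ l : Fin 3, ∑ i : Fin 3, Bf η l i q * pd (es l) (Wf η F0 i) q)
          + deriv e (h q) * ∑ k : Fin 3, Ff F0 k q * pd (es k) h q) :=
    funext fun q => by rw [hdiva q]; rfl
  have hPhi0 : (fun q => (∑ l : Fin 3, ∑ i : Fin 3, Bf η l i q * pd (es l) (vv η i) q)
      + deriv e (h q) * pd et h q) = fun _ => (0 : ℝ) := by
    funext q
    have h1 := hcont q
    simp only [hvfun] at h1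
    have h2 : ∑ l : Fin 3, ∑ i : Fin 3, Bf η l i q * pd (es l) (vv η i) q
        = -deriv e (h q) * pd et h q := h1
    rw [h2]; ring
  have part1 : ∀ p : ℝ × (Fin 3 → ℝ),
      fderiv ℝ (fun q => divaDirEta η F0 q + deriv e (h q) * dirH F0 h q) p ((1 : ℝ), 0) = 0 := by
    intro p
    rw [hfun]
    show pd et (fun q => (∑ l : Fin 3, ∑ i : Fin 3, Bf η l i q * pd (es l) (Wf η F0 i) q)
        + deriv e (h q) * ∑ k : Fin 3, Ff F0 k q * pd (es k) h q) p = 0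
    have hG1exp : pd et (fun q => ∑ l : Fin 3, ∑ i : Fin 3,
          Bf η l i q * pd (es l) (Wf η F0 i) q) p
        = ∑ l : Fin 3, ∑ i : Fin 3,
            ((-∑ m : Fin 3, ∑ r : Fin 3, Bf η l r p * pd (es m) (vv η r) p * Bf η m i p)
                * (∑ m : Fin 3, (pd (es l) (Ff F0 m) p * Af η i m p
                    + Ff F0 m p * pd (es l) (Af η i m) p))
              + Bf η l i p * (∑ m : Fin 3, (pd (es l) (Ff F0 m) p * pd (es m) (vv η i) p
                    + Ff F0 m p * pd (es l) (pd (es m) (vv η i)) p))) := by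
      rw [pd_sum (f := fun l q => ∑ i : Fin 3, Bf η l i q * pd (es l) (Wf η F0 i) q)
        (fun l => diffAt_of_smooth (ContDiff.sum fun i _ => (hdBf l i).mul (hdWfl i l)) p) et]
      refine Finset.sum_congr rfl fun l _ => ?_
      rw [pd_sum (f := fun i q => Bf η l i q * pd (es l) (Wf η F0 i) q)
        (fun i => diffAt_of_smooth ((hdBf l i).mul (hdWfl i l)) p) et]
      refine Finset.sum_congr rfl fun i _ => ?_
      rw [pd_mul (diffAt_of_smooth (hdBf l i) p) (diffAt_of_smooth (hdWfl i l) p) et]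
      rw [pdB hη hinv et p l i]
      rw [pd_comm (hWf hη hF0 i) et (es l) p]
      rw [show pd et (Wf η F0 i) = Vf η F0 i from funext (pd_Wf_t hη hF0 i)]
      rw [pd_Wf hη hF0 i (es l) p, pd_Vf hη hF0 i (es l) p]
      have hrw : ∀ m r : Fin 3, pd et (Af η r m) p = pd (es m) (vv η r) p :=
        fun m r => pd_et_Af hη r m p
      simp only [hrw]
    have hdirexp : pd et (fun q => ∑ k : Fin 3, Ff F0 k q * pd (es k) h q) p
        = ∑ k : Fin 3, Ff F0 k p * pd (es k) (pd et h) p := by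
      rw [pd_sum (f := fun k q => Ff F0 k q * pd (es k) h q)
        (fun k => (diff_Ff hF0 k p).mul (diffAt_of_smooth (pd_smooth hh _) p)) et]
      refine Finset.sum_congr rfl fun k _ => ?_
      rw [pd_mul (diff_Ff hF0 k p) (diffAt_of_smooth (pd_smooth hh _) p) et,
        pd_et_Ff hF0 k p, pd_comm hh et (es k) p]
      ring
    have hG2exp : pd et (fun q => deriv e (h q) * ∑ k : Fin 3, Ff F0 k q * pd (es k) h q) p
        = deriv (deriv e) (h p) * pd et h p * (∑ k : Fin 3, Ff F0 k p * pd (es k) h p)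
          + deriv e (h p) * (∑ k : Fin 3, Ff F0 k p * pd (es k) (pd et h) p) := by
      rw [pd_mul (hde1 p) (diffAt_of_smooth hdirHs p) et, pd_de hh he et p, hdirexp]
    have hPhiexp : ∀ k : Fin 3,
        pd (es k) (fun q => (∑ l : Fin 3, ∑ i : Fin 3, Bf η l i q * pd (es l) (vv η i) q)
            + deriv e (h q) * pd et h q) p
          = (∑ l : Fin 3, ∑ i : Fin 3,
              ((-∑ m : Fin 3, ∑ r : Fin 3, Bf η l r p * pd (es k) (Af η r m) p * Bf η m i p)
                  * pd (es l) (vv η i) p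
                + Bf η l i p * pd (es k) (pd (es l) (vv η i)) p))
            + (deriv (deriv e) (h p) * pd (es k) h p * pd et h p
                + deriv e (h p) * pd (es k) (pd et h) p) := by
      intro k
      rw [pd_add (f := fun q => ∑ l : Fin 3, ∑ i : Fin 3, Bf η l i q * pd (es l) (vv η i) q)
        (g := fun q => deriv e (h q) * pd et h q)
        (diffAt_of_smooth (ContDiff.sum fun l _ => ContDiff.sum fun i _ =>
          (hdBf l i).mul (pd_smooth (pd_smooth (hec hη i) et) _)) p)
        ((hde1 p).mul (diffAt_of_smooth (pd_smooth hh et) p)) (es k)]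
      congr 1
      · rw [pd_sum (f := fun l q => ∑ i : Fin 3, Bf η l i q * pd (es l) (vv η i) q)
          (fun l => diffAt_of_smooth (ContDiff.sum fun i _ =>
            (hdBf l i).mul (pd_smooth (hvv hη i) _)) p) (es k)]
        refine Finset.sum_congr rfl fun l _ => ?_
        rw [pd_sum (f := fun i q => Bf η l i q * pd (es l) (vv η i) q)
          (fun i => diffAt_of_smooth ((hdBf l i).mul (pd_smooth (hvv hη i) _)) p) (es k)]
        refine Finset.sum_congr rfl fun i _ => ?_
        rw [pd_mul (diffAt_of_smooth (hdBf l i) p)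
          (diffAt_of_smooth (pd_smooth (hvv hη i) _) p) (es k)]
        rw [pdB hη hinv (es k) p l i]
      · rw [pd_mul (hde1 p) (diffAt_of_smooth (pd_smooth hh et) p) (es k), pd_de hh he (es k) p]
    have KA := key_algebra (fun l i => Bf η l i p) (fun i m => Af η i m p)
      (fun i m => pd (es m) (vv η i) p) (fun m l => pd (es l) (Ff F0 m) p)
      (fun i m l => pd (es l) (Af η i m) p) (fun i m l => pd (es l) (pd (es m) (vv η i)) p)
      (fun k => Ff F0 k p) (fun k => pd (es k) h p) (fun k => pd (es k) (pd et h) p)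
      (deriv e (h p)) (deriv (deriv e) (h p)) (pd et h p)
      (fun m m' => hBA hη hinv p m m')
      (fun i k l => pd_comm (hec hη i) (es l) (es k) p)
      (fun i k l => pd_comm (hvv hη i) (es l) (es k) p)
    have KA2 : pd et (fun q => ∑ l : Fin 3, ∑ i : Fin 3,
          Bf η l i q * pd (es l) (Wf η F0 i) q) p
        + pd et (fun q => deriv e (h q) * ∑ k : Fin 3, Ff F0 k q * pd (es k) h q) p
        = ∑ k : Fin 3, Ff F0 k p *
            pd (es k) (fun q => (∑ l : Fin 3, ∑ i : Fin 3,
                Bf η l i q * pd (es l) (vv η i) q) + deriv e (h q) * pd et h q) p := by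
      rw [hG1exp, hG2exp]
      simp only [hPhiexp]
      exact KA
    rw [pd_add (f := fun q => ∑ l : Fin 3, ∑ i : Fin 3, Bf η l i q * pd (es l) (Wf η F0 i) q)
      (g := fun q => deriv e (h q) * ∑ k : Fin 3, Ff F0 k q * pd (es k) h q)
      (diffAt_of_smooth hG1s p) (hG2d p) et]
    rw [KA2]
    simp only [hPhi0, pd_const]
    simp
  refine ⟨part1, ?_⟩
  intro h0 p
  have hKd : ∀ q : E3, DifferentiableAt ℝ
      (fun q => divaDirEta η F0 q + deriv e (h q) * dirH F0 h q) q := by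
    intro q
    rw [hfun]
    exact (diffAt_of_smooth hG1s q).add (hG2d q)
  have hg : ∀ (y0 : Fin 3 → ℝ) (t : ℝ),
      divaDirEta η F0 (t, y0) + deriv e (h (t, y0)) * dirH F0 h (t, y0)
        = divaDirEta η F0 ((0:ℝ), y0) + deriv e (h ((0:ℝ), y0)) * dirH F0 h ((0:ℝ), y0) := by
    intro y0 t
    have hgd : ∀ s : ℝ, HasDerivAt
        (fun s : ℝ => divaDirEta η F0 (s, y0) + deriv e (h (s, y0)) * dirH F0 h (s, y0))
        (fderiv ℝ (fun q => divaDirEta η F0 q + deriv e (h q) * dirH F0 h q) (s, y0)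
          ((1:ℝ), 0)) s := by
      intro s
      have hι : HasDerivAt (fun s : ℝ => ((s, y0) : E3)) ((1:ℝ), (0 : Fin 3 → ℝ)) s :=
        (hasDerivAt_id s).prodMk (hasDerivAt_const s y0)
      exact (hKd (s, y0)).hasFDerivAt.comp_hasDerivAt s hι
    have hdz : ∀ s : ℝ, deriv
        (fun s : ℝ => divaDirEta η F0 (s, y0) + deriv e (h (s, y0)) * dirH F0 h (s, y0)) s
          = 0 := fun s => by rw [(hgd s).deriv]; exact part1 (s, y0)
    exact is_const_of_deriv_eq_zero (fun s => (hgd s).differentiableAt) hdz t 0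
  -- initial value
  have hι2 : ∀ y0 : Fin 3 → ℝ, HasFDerivAt (fun z : Fin 3 → ℝ => ((0:ℝ), z))
      ((0 : (Fin 3 → ℝ) →L[ℝ] ℝ).prod (ContinuousLinearMap.id ℝ (Fin 3 → ℝ))) y0 :=
    fun y0 => (hasFDerivAt_const (0:ℝ) y0).prodMk (hasFDerivAt_id y0)
  have hA0 : ∀ (y0 : Fin 3 → ℝ) (i l : Fin 3), Af η i l ((0:ℝ), y0) = (Pi.single l 1 : Fin 3 → ℝ) i := by
    intro y0 i l
    have hcomp : HasFDerivAt (η ∘ fun z : Fin 3 → ℝ => ((0:ℝ), z))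
        ((fderiv ℝ η ((0:ℝ), y0)).comp
          ((0 : (Fin 3 → ℝ) →L[ℝ] ℝ).prod (ContinuousLinearMap.id ℝ (Fin 3 → ℝ)))) y0 :=
      (hdiffη _).hasFDerivAt.comp y0 (hι2 y0)
    have hid : (η ∘ fun z : Fin 3 → ℝ => ((0:ℝ), z)) = id := funext fun z => hη0 z
    rw [hid] at hcomp
    have huniq := hcomp.unique (hasFDerivAt_id y0)
    have happ := congrFun (congrArg DFunLike.coe huniq) (Pi.single l 1)
    have h3 : Af η i l ((0:ℝ), y0) = fderiv ℝ η ((0:ℝ), y0) ((0:ℝ), Pi.single l 1) i :=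
      (fderiv_comp_pi (hdiffη _) _ i).symm
    rw [h3]
    have h4 : fderiv ℝ η ((0:ℝ), y0) ((0:ℝ), Pi.single l 1) = Pi.single l 1 := happ
    rw [h4]
  have hsj0 : ∀ y0 : Fin 3 → ℝ, sjac η ((0:ℝ), y0) = 1 := by
    intro y0
    ext i l
    rw [show sjac η ((0:ℝ), y0) i l = Af η i l ((0:ℝ), y0) from sjac_apply hη _ i l,
      hA0 y0 i l, Matrix.one_apply, Pi.single_apply]
  have hB0 : ∀ (y0 : Fin 3 → ℝ) (l i : Fin 3),
      Bf η l i ((0:ℝ), y0) = if l = i then 1 else 0 := by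
    intro y0 l i
    show (sjac η ((0:ℝ), y0))⁻¹ l i = _
    rw [hsj0 y0, inv_one, Matrix.one_apply]
  have hpdAf0 : ∀ (y0 : Fin 3 → ℝ) (i k l : Fin 3), pd (es l) (Af η i k) ((0:ℝ), y0) = 0 := by
    intro y0 i k l
    have hcomp : HasFDerivAt ((Af η i k) ∘ fun z : Fin 3 → ℝ => ((0:ℝ), z))
        ((fderiv ℝ (Af η i k) ((0:ℝ), y0)).comp
          ((0 : (Fin 3 → ℝ) →L[ℝ] ℝ).prod (ContinuousLinearMap.id ℝ (Fin 3 → ℝ)))) y0 :=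
      (diffAt_of_smooth (hAf hη i k) _).hasFDerivAt.comp y0 (hι2 y0)
    have hconstf : ((Af η i k) ∘ fun z : Fin 3 → ℝ => ((0:ℝ), z))
        = fun _ => (Pi.single k 1 : Fin 3 → ℝ) i := funext fun z => hA0 z i k
    rw [hconstf] at hcomp
    have huniq := hcomp.unique (hasFDerivAt_const _ y0)
    have happ := congrFun (congrArg DFunLike.coe huniq) (Pi.single l 1)
    simpa [pd, es] using happ
  have hpdFf0 : ∀ (y0 : Fin 3 → ℝ) (m l : Fin 3),
      pd (es l) (Ff F0 m) ((0:ℝ), y0) = fderiv ℝ F0 y0 (Pi.single l 1) m := by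
    intro y0 m l
    rw [pd_Ff hF0 m (es l) ((0:ℝ), y0)]
    exact (fderiv_comp_pi ((hF0.differentiable (by simp)).differentiableAt) _ m).symm
  have hdiva0 : ∀ y0 : Fin 3 → ℝ,
      divaDirEta η F0 ((0:ℝ), y0) = ∑ k : Fin 3, fderiv ℝ F0 y0 (Pi.single k 1) k := by
    intro y0
    rw [hdiva ((0:ℝ), y0)]
    have hstep : ∀ l i : Fin 3, Bf η l i ((0:ℝ), y0) * pd (es l) (Wf η F0 i) ((0:ℝ), y0)
        = (if l = i then 1 else 0) *
            (∑ m : Fin 3, (fderiv ℝ F0 y0 (Pi.single l 1) m * (Pi.single m 1 : Fin 3 → ℝ) i)) := by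
      intro l i
      rw [hB0 y0 l i, pd_Wf hη hF0 i (es l) ((0:ℝ), y0)]
      congr 1
      refine Finset.sum_congr rfl fun m _ => ?_
      rw [hpdFf0 y0 m l, hA0 y0 i m, hpdAf0 y0 i m l]
      ring
    calc ∑ l : Fin 3, ∑ i : Fin 3, Bf η l i ((0:ℝ), y0) * pd (es l) (Wf η F0 i) ((0:ℝ), y0)
        = ∑ l : Fin 3, ∑ i : Fin 3, (if l = i then 1 else 0) *
            (∑ m : Fin 3, (fderiv ℝ F0 y0 (Pi.single l 1) m * (Pi.single m 1 : Fin 3 → ℝ) i)) := by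
          exact Finset.sum_congr rfl fun l _ => Finset.sum_congr rfl fun i _ => hstep l i
      _ = ∑ k : Fin 3, fderiv ℝ F0 y0 (Pi.single k 1) k := by
          simp [Fin.sum_univ_three, Pi.single_apply]
  obtain ⟨t, y0⟩ := p
  have hval := hg y0 t
  have hzero : divaDirEta η F0 ((0:ℝ), y0)
      + deriv e (h ((0:ℝ), y0)) * dirH F0 h ((0:ℝ), y0) = 0 := by
    rw [hdiva0 y0, h0 y0]; ring
  have : divaDirEta η F0 (t, y0) + deriv e (h (t, y0)) * dirH F0 h (t, y0) = 0 :=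
    hval.trans hzero
  linarith
end
end

section
/- Let η : Ω → ℝ³ be C³ with invertible Jacobian, a = [∂η]^{-1}, and let D be a first-order constant-coefficient derivative (e.g. a tangential derivative ∂̄ or ∂_t when η depends on time). Then for any C² scalar f, the following exact Alinhac-type identity holds: D( a^{li} ∂_l f ) = a^{li} ∂_l ( D f − (Dη_r) a^{mr} ∂_m f ) + (Dη_r) a^{li} ∂_l ( a^{mr} ∂_m f ), i.e., D(∇_a^i f) = ∇_a^i( Df − Dη·∇_a f ) + Dη_r ∇_a^i(∇_a^r f). In particular the 'Alinhac good unknown' 𝐟 := Df − Dη·∇_a f satisfies D(∇_a f) = ∇_a 𝐟 + (Dη·∇_a)(∇_a f). -/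
noncomputable section

section AlinhacAux

variable {E : Type*} {F : Type*} [NormedAddCommGroup E] [NormedSpace ℝ E]
  [NormedAddCommGroup F] [NormedSpace ℝ F]

theorem alinhac_aux_cd (g : E → F) (hg : ContDiff ℝ 2 g) (w : E) :
    ContDiff ℝ 1 fun q => fderiv ℝ g q w :=
  (ContinuousLinearMap.apply ℝ F w).contDiff.comp (hg.fderiv_right (le_refl _))

theorem alinhac_aux_symm (g : E → F) (hg : ContDiff ℝ 2 g) (p v w : E) :
    fderiv ℝ (fun q => fderiv ℝ g q w) p v = fderiv ℝ (fun q => fderiv ℝ g q v) p w := by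
  have hd : DifferentiableAt ℝ (fderiv ℝ g) p :=
    ((hg.fderiv_right (m := 1) (le_refl _)).differentiable one_ne_zero) p
  have h1 : ∀ w : E, fderiv ℝ (fun q => fderiv ℝ g q w) p
      = (ContinuousLinearMap.apply ℝ F w).comp (fderiv ℝ (fderiv ℝ g) p) := fun w =>
    ((ContinuousLinearMap.apply ℝ F w).hasFDerivAt.comp p hd.hasFDerivAt).fderiv
  rw [h1, h1]
  exact (hg.contDiffAt.isSymmSndFDerivAt (by norm_num)).eq v w

theorem alinhac_aux_proj (g : E → Fin 3 → ℝ) (q : E) (hg : DifferentiableAt ℝ g q)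
    (w : E) (j : Fin 3) :
    fderiv ℝ (fun x => g x j) q w = fderiv ℝ g q w j := by
  have h := ((ContinuousLinearMap.proj (R := ℝ) (φ := fun _ : Fin 3 => ℝ) j).hasFDerivAt.comp q
    hg.hasFDerivAt).fderiv
  have h2 : (fun x => g x j)
      = (⇑(ContinuousLinearMap.proj (R := ℝ) (φ := fun _ : Fin 3 => ℝ) j) ∘ g) := rfl
  rw [h2, h]; rfl

theorem alinhac_aux_sum_mul (φ ψ : Fin 3 → E → ℝ) (p w : E)
    (hφ : ∀ j, DifferentiableAt ℝ (φ j) p) (hψ : ∀ j, DifferentiableAt ℝ (ψ j) p) :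
    fderiv ℝ (fun q => ∑ j, φ j q * ψ j q) p w
      = ∑ j, (fderiv ℝ (φ j) p w * ψ j p + φ j p * fderiv ℝ (ψ j) p w) := by
  rw [fderiv_fun_sum fun j _ => (hφ j).fun_mul (hψ j), ContinuousLinearMap.sum_apply]
  refine Finset.sum_congr rfl fun j _ => ?_
  rw [fderiv_fun_mul (hφ j) (hψ j)]
  simp only [ContinuousLinearMap.add_apply, ContinuousLinearMap.smul_apply, smul_eq_mul]
  ring

end AlinhacAux

set_option maxHeartbeats 4000000 in
/-- **The exact Alinhac identity.**  For `η` of class `C³` with invertible spatial Jacobian,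
`a = [∂η]⁻¹`, any first-order constant-coefficient derivative `D` (the directional derivative
along a fixed vector `u`, covering `∂_t` and the tangential derivatives `∂̄`), and any `C²`
scalar `f`:
`D(∇_a^i f) = ∇_a^i (Df − Dη·∇_a f) + Dη_r ∇_a^i (∇_a^r f)`,
so the Alinhac good unknown `𝐟 = Df − Dη·∇_a f` satisfies
`D(∇_a f) = ∇_a 𝐟 + (Dη·∇_a)(∇_a f)`. -/
theorem alinhac_good_unknown_identity
    (η : ℝ × (Fin 3 → ℝ) → (Fin 3 → ℝ)) (hη : ContDiff ℝ 3 η)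
    (hinv : ∀ p, IsUnit (sjac η p).det)
    (f : ℝ × (Fin 3 → ℝ) → ℝ) (hf : ContDiff ℝ 2 f) :
    ∀ (p : ℝ × (Fin 3 → ℝ)) (u : ℝ × (Fin 3 → ℝ)) (i : Fin 3),
      fderiv ℝ (fun q => ∑ l : Fin 3, (sjac η q)⁻¹ l i *
          fderiv ℝ f q ((0 : ℝ), Pi.single l 1)) p u =
        (∑ l : Fin 3, (sjac η p)⁻¹ l i *
          fderiv ℝ (fun q => fderiv ℝ f q u -
              ∑ r : Fin 3, fderiv ℝ η q u r *
                ∑ m : Fin 3, (sjac η q)⁻¹ m r * fderiv ℝ f q ((0 : ℝ), Pi.single m 1))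
            p ((0 : ℝ), Pi.single l 1)) +
        ∑ r : Fin 3, fderiv ℝ η p u r *
          ∑ l : Fin 3, (sjac η p)⁻¹ l i *
            fderiv ℝ (fun q => ∑ m : Fin 3, (sjac η q)⁻¹ m r *
                fderiv ℝ f q ((0 : ℝ), Pi.single m 1)) p ((0 : ℝ), Pi.single l 1) := by
  intro p u i
  have hη2 : ContDiff ℝ 2 η := hη.of_le (by norm_num)
  have hηc : ∀ r : Fin 3, ContDiff ℝ 2 (fun q => η q r) := fun r =>
    (ContinuousLinearMap.proj (R := ℝ) (φ := fun _ : Fin 3 => ℝ) r).contDiff.comp hη2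
  have hηdiff : Differentiable ℝ η := hη.differentiable (by norm_num)
  have hrwη : ∀ (w : ℝ × (Fin 3 → ℝ)) (r : Fin 3),
      (fun q => fderiv ℝ η q w r) = fun q => fderiv ℝ (fun x => η x r) q w := fun w r =>
    funext fun q => (alinhac_aux_proj η q (hηdiff q) w r).symm
  have dE : ∀ (w : ℝ × (Fin 3 → ℝ)) (r : Fin 3),
      DifferentiableAt ℝ (fun q => fderiv ℝ η q w r) p := by
    intro w r
    rw [hrwη]
    exact ((alinhac_aux_cd _ (hηc r) w).differentiable one_ne_zero) p
  have dg : ∀ w : ℝ × (Fin 3 → ℝ), DifferentiableAt ℝ (fun q => fderiv ℝ f q w) p :=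
    fun w => ((alinhac_aux_cd _ hf w).differentiable one_ne_zero) p
  have dEe : ∀ r m : Fin 3,
      DifferentiableAt ℝ (fun q => fderiv ℝ η q ((0 : ℝ), Pi.single m 1) r) p :=
    fun r m => dE _ r
  have dsj : ∀ r m : Fin 3, DifferentiableAt ℝ (fun q => sjac η q r m) p := fun r m => dE _ r
  have hdetne : (sjac η p).det ≠ 0 := isUnit_iff_ne_zero.mp (hinv p)
  have ddet : DifferentiableAt ℝ (fun q => (sjac η q).det) p := by
    have h1 : (fun q => (sjac η q).det) = fun q =>
        sjac η q 0 0 * sjac η q 1 1 * sjac η q 2 2 - sjac η q 0 0 * sjac η q 1 2 * sjac η q 2 1 -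
          sjac η q 0 1 * sjac η q 1 0 * sjac η q 2 2 + sjac η q 0 1 * sjac η q 1 2 * sjac η q 2 0 +
          sjac η q 0 2 * sjac η q 1 0 * sjac η q 2 1 -
          sjac η q 0 2 * sjac η q 1 1 * sjac η q 2 0 := by
      funext q; rw [Matrix.det_fin_three]
    rw [h1]
    simp only [sjac, Matrix.of_apply]
    fun_prop
  have dadj : ∀ l m : Fin 3, DifferentiableAt ℝ (fun q => (sjac η q).adjugate l m) p := by
    intro l m
    simp only [Matrix.adjugate_fin_three, sjac, Matrix.of_apply]
    fin_cases l <;> fin_cases m <;> simp <;> fun_prop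
  have hAeq : ∀ l m : Fin 3, (fun q => (sjac η q)⁻¹ l m)
      = fun q => ((sjac η q).det)⁻¹ * (sjac η q).adjugate l m := by
    intro l m; funext q
    rw [Matrix.inv_def, Ring.inverse_eq_inv']
    rfl
  have dA : ∀ l m : Fin 3, DifferentiableAt ℝ (fun q => (sjac η q)⁻¹ l m) p := by
    intro l m
    rw [hAeq l m]
    exact (ddet.inv hdetne).mul (dadj l m)
  have dh : ∀ r : Fin 3, DifferentiableAt ℝ
      (fun q => ∑ m : Fin 3, (sjac η q)⁻¹ m r * fderiv ℝ f q ((0 : ℝ), Pi.single m 1)) p :=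
    fun r => DifferentiableAt.fun_sum fun m _ => (dA m r).fun_mul (dg _)
  have hSf : ∀ l : Fin 3, fderiv ℝ (fun q => fderiv ℝ f q ((0 : ℝ), Pi.single l 1)) p u
      = fderiv ℝ (fun q => fderiv ℝ f q u) p ((0 : ℝ), Pi.single l 1) := fun l =>
    alinhac_aux_symm f hf p u _
  -- LHS expansion
  have eqL : fderiv ℝ (fun q => ∑ l : Fin 3, (sjac η q)⁻¹ l i *
        fderiv ℝ f q ((0 : ℝ), Pi.single l 1)) p u
      = ∑ l : Fin 3, (fderiv ℝ (fun q => (sjac η q)⁻¹ l i) p u *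
            fderiv ℝ f p ((0 : ℝ), Pi.single l 1)
          + (sjac η p)⁻¹ l i * fderiv ℝ (fun q => fderiv ℝ f q u) p ((0 : ℝ), Pi.single l 1)) := by
    refine (alinhac_aux_sum_mul (fun l q => (sjac η q)⁻¹ l i)
      (fun l q => fderiv ℝ f q ((0 : ℝ), Pi.single l 1)) p u (fun l => dA l i)
      (fun l => dg _)).trans ?_
    exact Finset.sum_congr rfl fun l _ => by rw [hSf l]
  -- inner expansion for the first RHS term
  have eqInner : ∀ l : Fin 3, fderiv ℝ (fun q => fderiv ℝ f q u -
        ∑ r : Fin 3, fderiv ℝ η q u r *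
          ∑ m : Fin 3, (sjac η q)⁻¹ m r * fderiv ℝ f q ((0 : ℝ), Pi.single m 1))
        p ((0 : ℝ), Pi.single l 1)
      = fderiv ℝ (fun q => fderiv ℝ f q u) p ((0 : ℝ), Pi.single l 1)
        - ∑ r : Fin 3,
            (fderiv ℝ (fun q => fderiv ℝ η q u r) p ((0 : ℝ), Pi.single l 1) *
                (∑ m : Fin 3, (sjac η p)⁻¹ m r * fderiv ℝ f p ((0 : ℝ), Pi.single m 1))
              + fderiv ℝ η p u r *
                fderiv ℝ (fun q => ∑ m : Fin 3, (sjac η q)⁻¹ m r *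
                  fderiv ℝ f q ((0 : ℝ), Pi.single m 1)) p ((0 : ℝ), Pi.single l 1)) := by
    intro l
    rw [fderiv_fun_sub (dg u) (DifferentiableAt.fun_sum fun r _ => (dE u r).fun_mul (dh r)),
      ContinuousLinearMap.sub_apply]
    congr 1
    exact alinhac_aux_sum_mul (fun r q => fderiv ℝ η q u r)
      (fun r q => ∑ m : Fin 3, (sjac η q)⁻¹ m r * fderiv ℝ f q ((0 : ℝ), Pi.single m 1))
      p ((0 : ℝ), Pi.single l 1) (fun r => dE u r) dh
  -- symmetry for the Jacobian entries
  have hJ' : ∀ r m : Fin 3, fderiv ℝ (fun q => sjac η q r m) p u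
      = fderiv ℝ (fun q => fderiv ℝ η q u r) p ((0 : ℝ), Pi.single m 1) := by
    intro r m
    have h1 : (fun q => sjac η q r m)
        = fun q => fderiv ℝ (fun x => η x r) q ((0 : ℝ), Pi.single m 1) := by
      funext q
      simp only [sjac, Matrix.of_apply]
      exact (alinhac_aux_proj η q (hηdiff q) _ r).symm
    rw [h1, alinhac_aux_symm _ (hηc r) p u _, ← hrwη u r]
  -- differentiated inverse identity
  have h0 : ∀ r : Fin 3, (0 : ℝ) = ∑ m : Fin 3,
      (fderiv ℝ (fun q => fderiv ℝ η q u r) p ((0 : ℝ), Pi.single m 1) * (sjac η p)⁻¹ m i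
        + sjac η p r m * fderiv ℝ (fun q => (sjac η q)⁻¹ m i) p u) := by
    intro r
    have hc : (fun q => ∑ m : Fin 3, sjac η q r m * (sjac η q)⁻¹ m i)
        = fun _ => (if r = i then (1 : ℝ) else 0) := by
      funext q
      rw [← Matrix.mul_apply, Matrix.mul_nonsing_inv _ (hinv q), Matrix.one_apply]
    have h1 := alinhac_aux_sum_mul (fun m q => sjac η q r m) (fun m q => (sjac η q)⁻¹ m i)
      p u (fun m => dsj r m) (fun m => dA m i)
    rw [hc] at h1
    simp only [fderiv_fun_const, Pi.zero_apply, ContinuousLinearMap.zero_apply] at h1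
    refine h1.trans (Finset.sum_congr rfl fun m _ => ?_)
    rw [hJ' r m]
  have hAJ : ∀ l m : Fin 3, ∑ r : Fin 3, (sjac η p)⁻¹ l r * sjac η p r m
      = if l = m then (1 : ℝ) else 0 := by
    intro l m
    rw [← Matrix.mul_apply, Matrix.nonsing_inv_mul _ (hinv p), Matrix.one_apply]
  -- assemble
  rw [eqL]
  simp only [eqInner]
  have h00 := h0 0; have h01 := h0 1; have h02 := h0 2
  have e00 : (sjac η p)⁻¹ 0 0 * sjac η p 0 0 + (sjac η p)⁻¹ 0 1 * sjac η p 1 0 + (sjac η p)⁻¹ 0 2 * sjac η p 2 0 = (1:ℝ) := by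
    have h := hAJ 0 0; rw [Fin.sum_univ_three] at h; simpa using h
  have e01 : (sjac η p)⁻¹ 0 0 * sjac η p 0 1 + (sjac η p)⁻¹ 0 1 * sjac η p 1 1 + (sjac η p)⁻¹ 0 2 * sjac η p 2 1 = (0:ℝ) := by
    have h := hAJ 0 1; rw [Fin.sum_univ_three] at h; simpa using h
  have e02 : (sjac η p)⁻¹ 0 0 * sjac η p 0 2 + (sjac η p)⁻¹ 0 1 * sjac η p 1 2 + (sjac η p)⁻¹ 0 2 * sjac η p 2 2 = (0:ℝ) := by
    have h := hAJ 0 2; rw [Fin.sum_univ_three] at h; simpa using h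
  have e10 : (sjac η p)⁻¹ 1 0 * sjac η p 0 0 + (sjac η p)⁻¹ 1 1 * sjac η p 1 0 + (sjac η p)⁻¹ 1 2 * sjac η p 2 0 = (0:ℝ) := by
    have h := hAJ 1 0; rw [Fin.sum_univ_three] at h; simpa using h
  have e11 : (sjac η p)⁻¹ 1 0 * sjac η p 0 1 + (sjac η p)⁻¹ 1 1 * sjac η p 1 1 + (sjac η p)⁻¹ 1 2 * sjac η p 2 1 = (1:ℝ) := by
    have h := hAJ 1 1; rw [Fin.sum_univ_three] at h; simpa using h
  have e12 : (sjac η p)⁻¹ 1 0 * sjac η p 0 2 + (sjac η p)⁻¹ 1 1 * sjac η p 1 2 + (sjac η p)⁻¹ 1 2 * sjac η p 2 2 = (0:ℝ) := by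
    have h := hAJ 1 2; rw [Fin.sum_univ_three] at h; simpa using h
  have e20 : (sjac η p)⁻¹ 2 0 * sjac η p 0 0 + (sjac η p)⁻¹ 2 1 * sjac η p 1 0 + (sjac η p)⁻¹ 2 2 * sjac η p 2 0 = (0:ℝ) := by
    have h := hAJ 2 0; rw [Fin.sum_univ_three] at h; simpa using h
  have e21 : (sjac η p)⁻¹ 2 0 * sjac η p 0 1 + (sjac η p)⁻¹ 2 1 * sjac η p 1 1 + (sjac η p)⁻¹ 2 2 * sjac η p 2 1 = (0:ℝ) := by
    have h := hAJ 2 1; rw [Fin.sum_univ_three] at h; simpa using h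
  have e22 : (sjac η p)⁻¹ 2 0 * sjac η p 0 2 + (sjac η p)⁻¹ 2 1 * sjac η p 1 2 + (sjac η p)⁻¹ 2 2 * sjac η p 2 2 = (1:ℝ) := by
    have h := hAJ 2 2; rw [Fin.sum_univ_three] at h; simpa using h
  simp only [Fin.sum_univ_three] at h00 h01 h02 e00 e01 e02 e10 e11 e12 e20 e21 e22 ⊢
  set g0 := fderiv ℝ f p ((0 : ℝ), Pi.single 0 1) with hg0
  set g1 := fderiv ℝ f p ((0 : ℝ), Pi.single 1 1) with hg1
  set g2 := fderiv ℝ f p ((0 : ℝ), Pi.single 2 1) with hg2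
  set A00 := (sjac η p)⁻¹ 0 0 with hA00
  set A01 := (sjac η p)⁻¹ 0 1 with hA01
  set A02 := (sjac η p)⁻¹ 0 2 with hA02
  set A10 := (sjac η p)⁻¹ 1 0 with hA10
  set A11 := (sjac η p)⁻¹ 1 1 with hA11
  set A12 := (sjac η p)⁻¹ 1 2 with hA12
  set A20 := (sjac η p)⁻¹ 2 0 with hA20
  set A21 := (sjac η p)⁻¹ 2 1 with hA21
  set A22 := (sjac η p)⁻¹ 2 2 with hA22
  set P0 := fderiv ℝ (fun q => (sjac η q)⁻¹ 0 i) p u with hP0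
  set P1 := fderiv ℝ (fun q => (sjac η q)⁻¹ 1 i) p u with hP1
  set P2 := fderiv ℝ (fun q => (sjac η q)⁻¹ 2 i) p u with hP2
  linear_combination
    (-(g0 * A00 + g1 * A10 + g2 * A20)) * h00
      + (-(g0 * A01 + g1 * A11 + g2 * A21)) * h01
      + (-(g0 * A02 + g1 * A12 + g2 * A22)) * h02
      + (-(g0 * P0)) * e00 + (-(g0 * P1)) * e01 + (-(g0 * P2)) * e02
      + (-(g1 * P0)) * e10 + (-(g1 * P1)) * e11 + (-(g1 * P2)) * e12
      + (-(g2 * P0)) * e20 + (-(g2 * P1)) * e21 + (-(g2 * P2)) * e22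
end
end
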